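/- arXiv:1007.2693 — 9 statements merged into one kernel-verified Lean document; each statement's English description precedes it below -/
import Mathlib

section
/- (Amalgamation Lemma) Assume p0=(A0,n0,U0) and p1=(A1,n1,U1) are twins with twin function σ, A0∩A1 < A0∖A1 < A1∖A0, ξ0∈A0∖A1, ξ1=σ(ξ0), and k<m<n0. Then p0 and p1 have a common extension p=(A,n,U)∈P (i.e. p≤p0 and p≤p1) such that ξ0∈U(ξ1,m)⊆U(ξ1,k)⊆U(ξ0,k). -/
noncomputable section

/-- The countable ordinals: the ordinals below `ω₁`. -/
abbrev CtblOrd : Type _ := {o : Ordinal // o < (Cardinal.aleph 1).ord}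

/-- A condition `p = ⟨A_p, n_p, U_p⟩`: `A_p` is a finite set of countable ordinals,
`n_p ∈ ω`, and `U_p` is a function from `A_p × n_p` to `𝒫(A_p)` (encoded as a total
function that takes the default value `∅` outside its domain) satisfying (P2) and (P3). -/
structure Cond where
  /-- the finite set `A_p ⊆ ω₁` -/
  A : Finset CtblOrd
  /-- the natural number `n_p` -/
  n : ℕ
  /-- the function `U_p : A_p × n_p → 𝒫(A_p)` -/
  U : CtblOrd → ℕ → Finset CtblOrd
  default_empty : ∀ α i, ¬(α ∈ A ∧ i < n) → U α i = ∅
  mem_powerset : ∀ α ∈ A, ∀ i < n, U α i ⊆ A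
  P2_self : ∀ α ∈ A, ∀ i < n, α ∈ U α i
  P2_mono : ∀ α ∈ A, ∀ i, 1 ≤ i → i < n → U α i ⊆ U α (i - 1)
  P3 : ∀ α ∈ A, ∀ β ∈ A, ∀ i < n, β ∈ U α i → U α i ⊆ U β 0 → β ≤ α

/-- `Cond.le q p` means `q ≤ p`: clauses (a), (b), (c), (d1), (d2). -/
def Cond.le (q p : Cond) : Prop :=
  p.A ⊆ q.A ∧ p.n ≤ q.n ∧
  (∀ α ∈ p.A, ∀ i < p.n, p.U α i = q.U α i ∩ p.A) ∧
  (∀ α ∈ p.A, ∀ i < p.n, ∀ β ∈ p.A, ∀ j < p.n,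
    p.U α i ∩ p.U β j = ∅ → q.U α i ∩ q.U β j = ∅) ∧
  (∀ α ∈ p.A, ∀ i < p.n, ∀ β ∈ p.A, ∀ j < p.n,
    p.U α i ⊆ p.U β j → q.U α i ⊆ q.U β j)

/-- `p0` and `p1` are twins with twin function `σ`: `n₀ = n₁`, `|A₀| = |A₁|`, `σ` is the
(unique) order preserving bijection from `A₀` onto `A₁`, (I1) `σ` is the identity on
`A₀ ∩ A₁`, and (I2) `U₁(σ(α), i) = σ''U₀(α, i)` for all `α ∈ A₀`, `i < n₀`. -/
def Twins (p0 p1 : Cond) (σ : CtblOrd → CtblOrd) : Prop :=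
  p0.n = p1.n ∧ p0.A.card = p1.A.card ∧
  p0.A.image σ = p1.A ∧
  (∀ α ∈ p0.A, ∀ β ∈ p0.A, α < β → σ α < σ β) ∧
  (∀ δ ∈ p0.A ∩ p1.A, σ δ = δ) ∧
  (∀ α ∈ p0.A, ∀ i < p0.n, p1.U (σ α) i = (p0.U α i).image σ)

/-- The triple `⟨A, n, U⟩` extends the condition `p` in the ordering of `P`:
clauses (a), (b), (c), (d1), (d2). -/
def ExtendsTriple (A : Finset CtblOrd) (n : ℕ) (U : CtblOrd → ℕ → Finset CtblOrd)
    (p : Cond) : Prop :=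
  p.A ⊆ A ∧ p.n ≤ n ∧
  (∀ α ∈ p.A, ∀ i < p.n, p.U α i = U α i ∩ p.A) ∧
  (∀ α ∈ p.A, ∀ i < p.n, ∀ β ∈ p.A, ∀ j < p.n,
    p.U α i ∩ p.U β j = ∅ → U α i ∩ U β j = ∅) ∧
  (∀ α ∈ p.A, ∀ i < p.n, ∀ β ∈ p.A, ∀ j < p.n,
    p.U α i ⊆ p.U β j → U α i ⊆ U β j)

namespace AmalgAux
open Finset

noncomputable def Dfor0 (p0 p1 : Cond) (γ : CtblOrd) (i : ℕ) : Finset CtblOrd :=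
  ((p0.A ∩ p1.A) ×ˢ Finset.range p0.n).biUnion
    fun z => if p0.U z.1 z.2 ⊆ p0.U γ i then p0.U z.1 z.2 else ∅

noncomputable def Dfor1 (p0 p1 : Cond) (γ : CtblOrd) (i : ℕ) : Finset CtblOrd :=
  ((p0.A ∩ p1.A) ×ˢ Finset.range p0.n).biUnion
    fun z => if p1.U z.1 z.2 ⊆ p1.U γ i then p0.U z.1 z.2 else ∅

noncomputable def Aform (p0 p1 : Cond) (σ : CtblOrd → CtblOrd) (ξ0 ξ1 : CtblOrd) (k : ℕ)
    (ε : CtblOrd) (γ : CtblOrd) (i : ℕ) : Finset CtblOrd :=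
  p0.U γ i ∪ (Dfor0 p0 p1 γ i).image σ ∪
    (if p0.U ξ0 k ⊆ p0.U γ i then p1.U ξ1 k ∪ {ε} else ∅)

noncomputable def Fform (p0 p1 : Cond) (ξ0 ξ1 : CtblOrd) (k m : ℕ)
    (ε : CtblOrd) (γ : CtblOrd) (i : ℕ) : Finset CtblOrd :=
  p1.U γ i ∪ Dfor1 p0 p1 γ i ∪
    (if p1.U ξ1 m ⊆ p1.U γ i then {ξ0} else ∅) ∪
    (if p1.U ξ1 k ⊆ p1.U γ i ∧ ∀ j < p0.n, ¬ p1.U γ i ⊆ p1.U ξ1 j then {ε} else ∅)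

noncomputable def newU (p0 p1 : Cond) (σ : CtblOrd → CtblOrd) (ξ0 ξ1 : CtblOrd) (k m : ℕ)
    (ε : CtblOrd) (γ : CtblOrd) (i : ℕ) : Finset CtblOrd :=
  if γ ∈ p0.A then Aform p0 p1 σ ξ0 ξ1 k ε γ i
  else if γ ∈ p1.A then Fform p0 p1 ξ0 ξ1 k m ε γ i
  else if γ = ε ∧ i < p0.n then {ε} else ∅

variable {p0 p1 : Cond} {σ : CtblOrd → CtblOrd} {ξ0 ξ1 x γ : CtblOrd} {k m i : ℕ} {ε : CtblOrd}

lemma mem_ite_finset {c : Prop} [Decidable c] {s : Finset CtblOrd} :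
    x ∈ (if c then s else ∅) ↔ c ∧ x ∈ s := by
  split_ifs with h <;> simp [h]

lemma mem_Dfor0 : x ∈ Dfor0 p0 p1 γ i ↔
    ∃ δ, (δ ∈ p0.A ∧ δ ∈ p1.A) ∧ ∃ l, l < p0.n ∧ p0.U δ l ⊆ p0.U γ i ∧ x ∈ p0.U δ l := by
  constructor
  · intro h
    rw [Dfor0, Finset.mem_biUnion] at h
    obtain ⟨z, hz, hx⟩ := h
    rw [Finset.mem_product, Finset.mem_inter, Finset.mem_range] at hz
    rw [mem_ite_finset] at hx
    exact ⟨z.1, hz.1, z.2, hz.2, hx.1, hx.2⟩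
  · rintro ⟨δ, hδ, l, hl, hc, hx⟩
    rw [Dfor0, Finset.mem_biUnion]
    refine ⟨(δ, l), ?_, ?_⟩
    · rw [Finset.mem_product, Finset.mem_inter, Finset.mem_range]; exact ⟨hδ, hl⟩
    · rw [mem_ite_finset]; exact ⟨hc, hx⟩

lemma mem_Dfor1 : x ∈ Dfor1 p0 p1 γ i ↔
    ∃ δ, (δ ∈ p0.A ∧ δ ∈ p1.A) ∧ ∃ l, l < p0.n ∧ p1.U δ l ⊆ p1.U γ i ∧ x ∈ p0.U δ l := by
  constructor
  · intro h
    rw [Dfor1, Finset.mem_biUnion] at h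
    obtain ⟨z, hz, hx⟩ := h
    rw [Finset.mem_product, Finset.mem_inter, Finset.mem_range] at hz
    rw [mem_ite_finset] at hx
    exact ⟨z.1, hz.1, z.2, hz.2, hx.1, hx.2⟩
  · rintro ⟨δ, hδ, l, hl, hc, hx⟩
    rw [Dfor1, Finset.mem_biUnion]
    refine ⟨(δ, l), ?_, ?_⟩
    · rw [Finset.mem_product, Finset.mem_inter, Finset.mem_range]; exact ⟨hδ, hl⟩
    · rw [mem_ite_finset]; exact ⟨hc, hx⟩

lemma mem_Aform : x ∈ Aform p0 p1 σ ξ0 ξ1 k ε γ i ↔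
    x ∈ p0.U γ i ∨
    (∃ δ, (δ ∈ p0.A ∧ δ ∈ p1.A) ∧ ∃ l, l < p0.n ∧ p0.U δ l ⊆ p0.U γ i ∧
      x ∈ (p0.U δ l).image σ) ∨
    (p0.U ξ0 k ⊆ p0.U γ i ∧ (x ∈ p1.U ξ1 k ∨ x = ε)) := by
  simp only [Aform, Finset.mem_union, mem_ite_finset, Finset.mem_singleton]
  constructor
  · rintro ((h | h) | h)
    · exact Or.inl h
    · rw [Finset.mem_image] at h
      obtain ⟨y, hy, rfl⟩ := h
      rw [mem_Dfor0] at hy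
      obtain ⟨δ, hδ, l, hl, hc, hy⟩ := hy
      exact Or.inr (Or.inl ⟨δ, hδ, l, hl, hc, Finset.mem_image_of_mem σ hy⟩)
    · exact Or.inr (Or.inr ⟨h.1, h.2⟩)
  · rintro (h | ⟨δ, hδ, l, hl, hc, hx⟩ | h)
    · exact Or.inl (Or.inl h)
    · refine Or.inl (Or.inr ?_)
      rw [Finset.mem_image] at hx ⊢
      obtain ⟨y, hy, rfl⟩ := hx
      exact ⟨y, mem_Dfor0.mpr ⟨δ, hδ, l, hl, hc, hy⟩, rfl⟩
    · exact Or.inr h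

lemma mem_Fform : x ∈ Fform p0 p1 ξ0 ξ1 k m ε γ i ↔
    x ∈ p1.U γ i ∨
    (∃ δ, (δ ∈ p0.A ∧ δ ∈ p1.A) ∧ ∃ l, l < p0.n ∧ p1.U δ l ⊆ p1.U γ i ∧ x ∈ p0.U δ l) ∨
    (p1.U ξ1 m ⊆ p1.U γ i ∧ x = ξ0) ∨
    ((p1.U ξ1 k ⊆ p1.U γ i ∧ ∀ j < p0.n, ¬ p1.U γ i ⊆ p1.U ξ1 j) ∧ x = ε) := by
  simp only [Fform, Finset.mem_union, mem_ite_finset, Finset.mem_singleton]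
  constructor
  · rintro (((h | h) | h) | h)
    · exact Or.inl h
    · exact Or.inr (Or.inl (mem_Dfor1.mp h))
    · exact Or.inr (Or.inr (Or.inl h))
    · exact Or.inr (Or.inr (Or.inr h))
  · rintro (h | h | h | h)
    · exact Or.inl (Or.inl (Or.inl h))
    · exact Or.inl (Or.inl (Or.inr (mem_Dfor1.mpr h)))
    · exact Or.inl (Or.inr h)
    · exact Or.inr h

end AmalgAux



noncomputable instance : Infinite CtblOrd := by
  apply Infinite.of_injective (fun n : ℕ => (⟨(n : Ordinal), by
    rw [Cardinal.lt_ord]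
    simp only [Ordinal.card_nat]
    exact (Cardinal.nat_lt_aleph0 n).trans_le (Cardinal.aleph0_le_aleph 1)⟩ : CtblOrd))
  intro a b h
  simpa using congrArg Subtype.val h

/-- Amalgamation Lemma: twins `p0`, `p1` with `A0∩A1 < A0∖A1 < A1∖A0`, `ξ0 ∈ A0∖A1`, `ξ1 = σ(ξ0)` and `k < m < n0` have a common extension `p` with `ξ0 ∈ U(ξ1,m) ⊆ U(ξ1,k) ⊆ U(ξ0,k)`. -/
theorem amalgamation_lemma
    (p0 p1 : Cond) (σ : CtblOrd → CtblOrd)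
    (htw : Twins p0 p1 σ)
    (hsep1 : ∀ x ∈ p0.A ∩ p1.A, ∀ y ∈ p0.A \ p1.A, x < y)
    (hsep2 : ∀ y ∈ p0.A \ p1.A, ∀ z ∈ p1.A \ p0.A, y < z)
    (ξ0 ξ1 : CtblOrd) (hξ0 : ξ0 ∈ p0.A \ p1.A) (hξ1 : ξ1 = σ ξ0)
    (k m : ℕ) (hkm : k < m) (hmn : m < p0.n)
    :
    ∃ p : Cond, Cond.le p p0 ∧ Cond.le p p1 ∧
      ξ0 ∈ p.U ξ1 m ∧ p.U ξ1 m ⊆ p.U ξ1 k ∧ p.U ξ1 k ⊆ p.U ξ0 k := by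
  classical
  obtain ⟨hn01, hcard, himg, hmono, hfix, hI2⟩ := htw
  obtain ⟨hξ0A0, hξ0A1⟩ := Finset.mem_sdiff.mp hξ0
  have hkn : k < p0.n := hkm.trans hmn
  have hn0pos : 0 < p0.n := Nat.lt_of_le_of_lt (Nat.zero_le k) hkn
  obtain ⟨ε, hε⟩ := Infinite.exists_notMem_finset (p0.A ∪ p1.A)
  have hεA0 : ε ∉ p0.A := fun h => hε (Finset.mem_union_left _ h)
  have hεA1 : ε ∉ p1.A := fun h => hε (Finset.mem_union_right _ h)
  have hσA1 : ∀ x ∈ p0.A, σ x ∈ p1.A := by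
    intro x hx; rw [← himg]; exact Finset.mem_image_of_mem σ hx
  have hinj : ∀ x ∈ p0.A, ∀ y ∈ p0.A, σ x = σ y → x = y := by
    intro x hx y hy hxy
    rcases lt_trichotomy x y with h|h|h
    · exact absurd hxy (ne_of_lt (hmono x hx y hy h))
    · exact h
    · exact absurd hxy.symm (ne_of_lt (hmono y hy x hx h))
  have hDmem : ∀ x ∈ p0.A, σ x ∈ p0.A → x ∈ p1.A := by
    intro x hx hσx
    have h2 : σ (σ x) = σ x := hfix (σ x) (Finset.mem_inter.mpr ⟨hσx, hσA1 x hx⟩)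
    have h3 : x = σ x := hinj x hx (σ x) hσx h2.symm
    rw [h3]; exact hσA1 x hx
  have hξ1A1 : ξ1 ∈ p1.A := by rw [hξ1]; exact hσA1 ξ0 hξ0A0
  have hξ1A0 : ξ1 ∉ p0.A := by
    intro h; rw [hξ1] at h; exact hξ0A1 (hDmem ξ0 hξ0A0 h)
  have hU0A : ∀ γ i, p0.U γ i ⊆ p0.A := by
    intro γ i
    by_cases h : γ ∈ p0.A ∧ i < p0.n
    · exact p0.mem_powerset γ h.1 i h.2
    · rw [p0.default_empty γ i h]; exact Finset.empty_subset _
  have hU1A : ∀ γ i, p1.U γ i ⊆ p1.A := by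
    intro γ i
    by_cases h : γ ∈ p1.A ∧ i < p1.n
    · exact p1.mem_powerset γ h.1 i h.2
    · rw [p1.default_empty γ i h]; exact Finset.empty_subset _
  have hchain0 : ∀ γ (i j : ℕ), i ≤ j → j < p0.n → p0.U γ j ⊆ p0.U γ i := by
    intro γ i j
    by_cases hγ : γ ∈ p0.A
    · induction j with
      | zero =>
        intro hij _
        have : i = 0 := Nat.le_zero.mp hij
        rw [this]
      | succ j ih =>
        intro hij hjn
        rcases Nat.eq_or_lt_of_le hij with h|h
        · rw [h]
        · have h1 : p0.U γ (j+1) ⊆ p0.U γ j := by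
            have := p0.P2_mono γ hγ (j+1) (Nat.succ_le_succ (Nat.zero_le j)) hjn
            simpa using this
          exact h1.trans (ih (Nat.lt_succ_iff.mp h) (Nat.lt_of_succ_lt hjn))
    · intro _ _
      rw [p0.default_empty γ j (by tauto)]
      exact Finset.empty_subset _
  have hchain1 : ∀ γ (i j : ℕ), i ≤ j → j < p0.n → p1.U γ j ⊆ p1.U γ i := by
    rw [hn01]
    intro γ i j
    by_cases hγ : γ ∈ p1.A
    · induction j with
      | zero =>
        intro hij _
        have : i = 0 := Nat.le_zero.mp hij
        rw [this]
      | succ j ih =>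
        intro hij hjn
        rcases Nat.eq_or_lt_of_le hij with h|h
        · rw [h]
        · have h1 : p1.U γ (j+1) ⊆ p1.U γ j := by
            have := p1.P2_mono γ hγ (j+1) (Nat.succ_le_succ (Nat.zero_le j)) hjn
            simpa using this
          exact h1.trans (ih (Nat.lt_succ_iff.mp h) (Nat.lt_of_succ_lt hjn))
    · intro _ _
      rw [p1.default_empty γ j (by tauto)]
      exact Finset.empty_subset _
  have hA0img : ∀ (S : Finset CtblOrd), S ⊆ p0.A → ∀ x, x ∈ S.image σ → x ∈ p0.A → x ∈ S := by
    intro S hS x hx hxA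
    rw [Finset.mem_image] at hx
    obtain ⟨y, hy, rfl⟩ := hx
    have h1 : y ∈ p1.A := hDmem y (hS hy) hxA
    rw [hfix y (Finset.mem_inter.mpr ⟨hS hy, h1⟩)]
    exact hy
  have himgsub : ∀ S T : Finset CtblOrd, S ⊆ p0.A → T ⊆ p0.A →
      S.image σ ⊆ T.image σ → S ⊆ T := by
    intro S T hS hT h x hx
    have h1 : σ x ∈ T.image σ := h (Finset.mem_image_of_mem σ hx)
    rw [Finset.mem_image] at h1
    obtain ⟨y, hy, hyx⟩ := h1
    rwa [← hinj y (hT hy) x (hS hx) hyx]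
  have hT1 : ∀ δ, δ ∈ p0.A → δ ∈ p1.A → ∀ l, l < p0.n →
      p1.U δ l = (p0.U δ l).image σ := by
    intro δ h0 h1 l hl
    have := hI2 δ h0 l hl
    rwa [hfix δ (Finset.mem_inter.mpr ⟨h0, h1⟩)] at this
  have hU1ξ1 : ∀ j, j < p0.n → p1.U ξ1 j = (p0.U ξ0 j).image σ := by
    intro j hj; rw [hξ1]; exact hI2 ξ0 hξ0A0 j hj
  -- form-level facts
  have RA0 : ∀ γ i x, x ∈ AmalgAux.Aform p0 p1 σ ξ0 ξ1 k ε γ i → x ∈ p0.A → x ∈ p0.U γ i := by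
    intro γ i x hx hxA
    rcases AmalgAux.mem_Aform.mp hx with h | ⟨δ, hδ, l, hl, hc, h⟩ | ⟨hc, h | h⟩
    · exact h
    · exact hc (hA0img (p0.U δ l) (hU0A δ l) x h hxA)
    · rw [hU1ξ1 k hkn] at h
      exact hc (hA0img (p0.U ξ0 k) (hU0A ξ0 k) x h hxA)
    · exact absurd (h ▸ hxA) hεA0
  have RF1 : ∀ γ i x, x ∈ AmalgAux.Fform p0 p1 ξ0 ξ1 k m ε γ i → x ∈ p1.A → x ∈ p1.U γ i := by
    intro γ i x hx hxA
    rcases AmalgAux.mem_Fform.mp hx with h | ⟨δ, hδ, l, hl, hc, h⟩ | ⟨hc, h⟩ | ⟨hc, h⟩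
    · exact h
    · apply hc
      rw [hT1 δ hδ.1 hδ.2 l hl]
      have h1 : σ x = x := hfix x (Finset.mem_inter.mpr ⟨hU0A δ l h, hxA⟩)
      rw [← h1]
      exact Finset.mem_image_of_mem σ h
    · exact absurd (h ▸ hxA) hξ0A1
    · exact absurd (h ▸ hxA) hεA1
  have RF0 : ∀ a, a ∈ p0.A → ∀ i, i < p0.n → ∀ x,
      x ∈ AmalgAux.Fform p0 p1 ξ0 ξ1 k m ε (σ a) i → x ∈ p0.A → x ∈ p0.U a i := by
    intro a ha i hi x hx hxA
    rcases AmalgAux.mem_Fform.mp hx with h | ⟨δ, hδ, l, hl, hc, h⟩ | ⟨hc, h⟩ | ⟨hc, h⟩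
    · rw [hI2 a ha i hi] at h
      exact hA0img (p0.U a i) (hU0A a i) x h hxA
    · have hc' : p0.U δ l ⊆ p0.U a i := by
        apply himgsub _ _ (hU0A δ l) (hU0A a i)
        rw [← hT1 δ hδ.1 hδ.2 l hl, ← hI2 a ha i hi]
        exact hc
      exact hc' h
    · have hc' : p0.U ξ0 m ⊆ p0.U a i := by
        apply himgsub _ _ (hU0A ξ0 m) (hU0A a i)
        rw [← hU1ξ1 m hmn, ← hI2 a ha i hi]
        exact hc
      rw [h]
      exact hc' (p0.P2_self ξ0 hξ0A0 m hmn)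
    · exact absurd (h ▸ hxA) hεA0
  have bndA : ∀ γ i x, x ∈ AmalgAux.Aform p0 p1 σ ξ0 ξ1 k ε γ i →
      x = ε ∨ x ∈ p0.U γ i ∨ ∃ y, y ∈ p0.U γ i ∧ x = σ y := by
    intro γ i x hx
    rcases AmalgAux.mem_Aform.mp hx with h | ⟨δ, hδ, l, hl, hc, h⟩ | ⟨hc, h | h⟩
    · exact Or.inr (Or.inl h)
    · rw [Finset.mem_image] at h
      obtain ⟨y, hy, rfl⟩ := h
      exact Or.inr (Or.inr ⟨y, hc hy, rfl⟩)
    · rw [hU1ξ1 k hkn, Finset.mem_image] at h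
      obtain ⟨y, hy, rfl⟩ := h
      exact Or.inr (Or.inr ⟨y, hc hy, rfl⟩)
    · exact Or.inl h
  have bndF : ∀ γ i x, x ∈ AmalgAux.Fform p0 p1 ξ0 ξ1 k m ε γ i →
      x = ε ∨ x ∈ p1.U γ i ∨ (x ∈ p0.A ∧ σ x ∈ p1.U γ i) := by
    intro γ i x hx
    rcases AmalgAux.mem_Fform.mp hx with h | ⟨δ, hδ, l, hl, hc, h⟩ | ⟨hc, h⟩ | ⟨hc, h⟩
    · exact Or.inr (Or.inl h)
    · refine Or.inr (Or.inr ⟨hU0A δ l h, hc ?_⟩)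
      rw [hT1 δ hδ.1 hδ.2 l hl]
      exact Finset.mem_image_of_mem σ h
    · refine Or.inr (Or.inr ⟨h ▸ hξ0A0, hc ?_⟩)
      rw [h, ← hξ1]
      exact p1.P2_self ξ1 hξ1A1 m (hn01 ▸ hmn)
    · exact Or.inl h
  have epsA : ∀ γ i, ε ∈ AmalgAux.Aform p0 p1 σ ξ0 ξ1 k ε γ i ↔ p0.U ξ0 k ⊆ p0.U γ i := by
    intro γ i
    constructor
    · intro hx
      rcases AmalgAux.mem_Aform.mp hx with h | ⟨δ, hδ, l, hl, hc, h⟩ | ⟨hc, h | h⟩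
      · exact absurd (hU0A γ i h) hεA0
      · rw [Finset.mem_image] at h
        obtain ⟨y, hy, hyε⟩ := h
        exact absurd (hyε ▸ hσA1 y (hU0A δ l hy)) hεA1
      · exact absurd (hU1A ξ1 k h) hεA1
      · exact hc
    · intro hc
      exact AmalgAux.mem_Aform.mpr (Or.inr (Or.inr ⟨hc, Or.inr rfl⟩))
  have epsF : ∀ γ i, ε ∈ AmalgAux.Fform p0 p1 ξ0 ξ1 k m ε γ i ↔
      (p1.U ξ1 k ⊆ p1.U γ i ∧ ∀ j < p0.n, ¬ p1.U γ i ⊆ p1.U ξ1 j) := by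
    intro γ i
    constructor
    · intro hx
      rcases AmalgAux.mem_Fform.mp hx with h | ⟨δ, hδ, l, hl, hc, h⟩ | ⟨hc, h⟩ | ⟨hc, h⟩
      · exact absurd (hU1A γ i h) hεA1
      · exact absurd (hU0A δ l h) hεA0
      · exact absurd (h ▸ hξ0A0) hεA0
      · exact hc
    · intro hc
      exact AmalgAux.mem_Fform.mpr (Or.inr (Or.inr (Or.inr ⟨hc, rfl⟩)))
  have monoA : ∀ α i β j, p0.U α i ⊆ p0.U β j →
      AmalgAux.Aform p0 p1 σ ξ0 ξ1 k ε α i ⊆ AmalgAux.Aform p0 p1 σ ξ0 ξ1 k ε β j := by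
    intro α i β j hs x hx
    rcases AmalgAux.mem_Aform.mp hx with h | ⟨δ, hδ, l, hl, hc, h⟩ | ⟨hc, h⟩
    · exact AmalgAux.mem_Aform.mpr (Or.inl (hs h))
    · exact AmalgAux.mem_Aform.mpr (Or.inr (Or.inl ⟨δ, hδ, l, hl, hc.trans hs, h⟩))
    · exact AmalgAux.mem_Aform.mpr (Or.inr (Or.inr ⟨hc.trans hs, h⟩))
  have monoF : ∀ α i β j, p1.U α i ⊆ p1.U β j →
      AmalgAux.Fform p0 p1 ξ0 ξ1 k m ε α i ⊆ AmalgAux.Fform p0 p1 ξ0 ξ1 k m ε β j := by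
    intro α i β j hs x hx
    rcases AmalgAux.mem_Fform.mp hx with h | ⟨δ, hδ, l, hl, hc, h⟩ | ⟨hc, h⟩ | ⟨⟨hc, hexc⟩, h⟩
    · exact AmalgAux.mem_Fform.mpr (Or.inl (hs h))
    · exact AmalgAux.mem_Fform.mpr (Or.inr (Or.inl ⟨δ, hδ, l, hl, hc.trans hs, h⟩))
    · exact AmalgAux.mem_Fform.mpr (Or.inr (Or.inr (Or.inl ⟨hc.trans hs, h⟩)))
    · refine AmalgAux.mem_Fform.mpr (Or.inr (Or.inr (Or.inr ⟨⟨hc.trans hs, ?_⟩, h⟩)))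
      intro j' hj' hsub'
      exact hexc j' hj' (hs.trans hsub')
  have DFF : ∀ δ, δ ∈ p0.A → δ ∈ p1.A → ∀ i, i < p0.n →
      AmalgAux.Aform p0 p1 σ ξ0 ξ1 k ε δ i = AmalgAux.Fform p0 p1 ξ0 ξ1 k m ε δ i := by
    intro δ h0 h1 i hi
    have hδD : δ ∈ p0.A ∩ p1.A := Finset.mem_inter.mpr ⟨h0, h1⟩
    apply Finset.Subset.antisymm
    · intro x hx
      rcases AmalgAux.mem_Aform.mp hx with h | ⟨δ', hδ', l, hl, hc, h⟩ | ⟨hc, h | h⟩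
      · exact AmalgAux.mem_Fform.mpr (Or.inr (Or.inl ⟨δ, ⟨h0, h1⟩, i, hi, subset_rfl, h⟩))
      · refine AmalgAux.mem_Fform.mpr (Or.inl ?_)
        have : p1.U δ' l ⊆ p1.U δ i := by
          rw [hT1 δ' hδ'.1 hδ'.2 l hl, hT1 δ h0 h1 i hi]
          exact Finset.image_subset_image hc
        apply this
        rw [hT1 δ' hδ'.1 hδ'.2 l hl]
        exact h
      · refine AmalgAux.mem_Fform.mpr (Or.inl ?_)
        have : p1.U ξ1 k ⊆ p1.U δ i := by
          rw [hU1ξ1 k hkn, hT1 δ h0 h1 i hi]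
          exact Finset.image_subset_image hc
        exact this h
      · refine AmalgAux.mem_Fform.mpr (Or.inr (Or.inr (Or.inr ⟨⟨?_, ?_⟩, h⟩)))
        · rw [hU1ξ1 k hkn, hT1 δ h0 h1 i hi]
          exact Finset.image_subset_image hc
        · intro j hj hsub'
          have hsub0 : p0.U δ i ⊆ p0.U ξ0 j := by
            apply himgsub _ _ (hU0A δ i) (hU0A ξ0 j)
            rw [← hT1 δ h0 h1 i hi, ← hU1ξ1 j hj]
            exact hsub'
          have hξin : ξ0 ∈ p0.U δ i := hc (p0.P2_self ξ0 hξ0A0 k hkn)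
          have hsub00 : p0.U δ i ⊆ p0.U ξ0 0 :=
            hsub0.trans (hchain0 ξ0 0 j (Nat.zero_le j) hj)
          have := p0.P3 δ h0 ξ0 hξ0A0 i hi hξin hsub00
          exact absurd (hsep1 δ hδD ξ0 hξ0) (not_lt.mpr this)
    · intro x hx
      rcases AmalgAux.mem_Fform.mp hx with h | ⟨δ', hδ', l, hl, hc, h⟩ | ⟨hc, h⟩ | ⟨⟨hc, hexc⟩, h⟩
      · refine AmalgAux.mem_Aform.mpr (Or.inr (Or.inl ⟨δ, ⟨h0, h1⟩, i, hi, subset_rfl, ?_⟩))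
        rw [← hT1 δ h0 h1 i hi]
        exact h
      · have hc' : p0.U δ' l ⊆ p0.U δ i := by
          apply himgsub _ _ (hU0A δ' l) (hU0A δ i)
          rw [← hT1 δ' hδ'.1 hδ'.2 l hl, ← hT1 δ h0 h1 i hi]
          exact hc
        exact AmalgAux.mem_Aform.mpr (Or.inl (hc' h))
      · have hc' : p0.U ξ0 m ⊆ p0.U δ i := by
          apply himgsub _ _ (hU0A ξ0 m) (hU0A δ i)
          rw [← hU1ξ1 m hmn, ← hT1 δ h0 h1 i hi]
          exact hc
        rw [h]
        exact AmalgAux.mem_Aform.mpr (Or.inl (hc' (p0.P2_self ξ0 hξ0A0 m hmn)))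
      · have hc' : p0.U ξ0 k ⊆ p0.U δ i := by
          apply himgsub _ _ (hU0A ξ0 k) (hU0A δ i)
          rw [← hU1ξ1 k hkn, ← hT1 δ h0 h1 i hi]
          exact hc
        exact AmalgAux.mem_Aform.mpr (Or.inr (Or.inr ⟨hc', Or.inr h⟩))
  have emptyA : ∀ γ i, ¬ (γ ∈ p0.A ∧ i < p0.n) → AmalgAux.Aform p0 p1 σ ξ0 ξ1 k ε γ i = ∅ := by
    intro γ i h
    rw [Finset.eq_empty_iff_forall_notMem]
    intro x hx
    have h0 : p0.U γ i = ∅ := p0.default_empty γ i h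
    rcases AmalgAux.mem_Aform.mp hx with hh | ⟨δ, hδ, l, hl, hc, hh⟩ | ⟨hc, hh⟩
    · rw [h0] at hh; exact absurd hh (Finset.notMem_empty x)
    · rw [h0] at hc
      exact absurd (hc (p0.P2_self δ hδ.1 l hl)) (Finset.notMem_empty δ)
    · rw [h0] at hc
      exact absurd (hc (p0.P2_self ξ0 hξ0A0 k hkn)) (Finset.notMem_empty ξ0)
  have emptyF : ∀ γ i, ¬ (γ ∈ p1.A ∧ i < p0.n) → AmalgAux.Fform p0 p1 ξ0 ξ1 k m ε γ i = ∅ := by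
    intro γ i h
    rw [Finset.eq_empty_iff_forall_notMem]
    intro x hx
    have h0 : p1.U γ i = ∅ := p1.default_empty γ i (by rw [← hn01]; exact h)
    rcases AmalgAux.mem_Fform.mp hx with hh | ⟨δ, hδ, l, hl, hc, hh⟩ | ⟨hc, hh⟩ | ⟨⟨hc, hexc⟩, hh⟩
    · rw [h0] at hh; exact absurd hh (Finset.notMem_empty x)
    · rw [h0] at hc
      have : δ ∈ p1.U δ l := p1.P2_self δ hδ.2 l (hn01 ▸ hl)
      exact absurd (hc this) (Finset.notMem_empty δ)
    · rw [h0] at hc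
      have : ξ1 ∈ p1.U ξ1 m := p1.P2_self ξ1 hξ1A1 m (hn01 ▸ hmn)
      exact absurd (hc this) (Finset.notMem_empty ξ1)
    · rw [h0] at hc
      have : ξ1 ∈ p1.U ξ1 k := p1.P2_self ξ1 hξ1A1 k (hn01 ▸ hkn)
      exact absurd (hc this) (Finset.notMem_empty ξ1)
  -- branch lemmas for newU
  have hbA : ∀ γ, γ ∈ p0.A → ∀ i,
      AmalgAux.newU p0 p1 σ ξ0 ξ1 k m ε γ i = AmalgAux.Aform p0 p1 σ ξ0 ξ1 k ε γ i := by
    intro γ hγ i; simp [AmalgAux.newU, hγ]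
  have hbF : ∀ γ, γ ∉ p0.A → γ ∈ p1.A → ∀ i,
      AmalgAux.newU p0 p1 σ ξ0 ξ1 k m ε γ i = AmalgAux.Fform p0 p1 ξ0 ξ1 k m ε γ i := by
    intro γ h0 h1 i; simp [AmalgAux.newU, h0, h1]
  have hbe : ∀ i, i < p0.n → AmalgAux.newU p0 p1 σ ξ0 ξ1 k m ε ε i = {ε} := by
    intro i hi; simp [AmalgAux.newU, hεA0, hεA1, hi]
  have hbF1 : ∀ γ, γ ∈ p1.A → ∀ i, i < p0.n →
      AmalgAux.newU p0 p1 σ ξ0 ξ1 k m ε γ i = AmalgAux.Fform p0 p1 ξ0 ξ1 k m ε γ i := by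
    intro γ h1 i hi
    by_cases h0 : γ ∈ p0.A
    · rw [hbA γ h0 i]; exact DFF γ h0 h1 i hi
    · exact hbF γ h0 h1 i
  have hεmemA : ε ∈ p0.A ∪ p1.A ∪ {ε} :=
    Finset.mem_union_right _ (Finset.mem_singleton_self ε)
  have hself : ∀ γ ∈ p0.A ∪ p1.A ∪ {ε}, ∀ i < p0.n,
      γ ∈ AmalgAux.newU p0 p1 σ ξ0 ξ1 k m ε γ i := by
    intro γ hγ i hi
    by_cases h0 : γ ∈ p0.A
    · rw [hbA γ h0 i]
      exact AmalgAux.mem_Aform.mpr (Or.inl (p0.P2_self γ h0 i hi))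
    · by_cases h1 : γ ∈ p1.A
      · rw [hbF γ h0 h1 i]
        exact AmalgAux.mem_Fform.mpr (Or.inl (p1.P2_self γ h1 i (hn01 ▸ hi)))
      · have hγε : γ = ε := by
          rcases Finset.mem_union.mp hγ with h | h
          · rcases Finset.mem_union.mp h with h | h
            · exact absurd h h0
            · exact absurd h h1
          · exact Finset.mem_singleton.mp h
        rw [hγε, hbe i hi]
        exact Finset.mem_singleton_self ε
  refine ⟨⟨p0.A ∪ p1.A ∪ {ε}, p0.n, AmalgAux.newU p0 p1 σ ξ0 ξ1 k m ε,
    ?_, ?_, hself, ?_, ?_⟩, ?_, ?_, ?_, ?_, ?_⟩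
  · -- default_empty
    intro γ i h
    by_cases h0 : γ ∈ p0.A
    · rw [hbA γ h0 i]
      apply emptyA
      rintro ⟨_, hi⟩
      exact h ⟨Finset.mem_union_left _ (Finset.mem_union_left _ h0), hi⟩
    · by_cases h1 : γ ∈ p1.A
      · rw [hbF γ h0 h1 i]
        apply emptyF
        rintro ⟨_, hi⟩
        exact h ⟨Finset.mem_union_left _ (Finset.mem_union_right _ h1), hi⟩
      · simp only [AmalgAux.newU, if_neg h0, if_neg h1]
        rw [if_neg]
        rintro ⟨rfl, hi⟩
        exact h ⟨hεmemA, hi⟩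
  · -- mem_powerset
    intro γ hγ i hi
    by_cases h0 : γ ∈ p0.A
    · rw [hbA γ h0 i]
      intro x hx
      rcases bndA γ i x hx with rfl | h | ⟨y, hy, rfl⟩
      · exact hεmemA
      · exact Finset.mem_union_left _ (Finset.mem_union_left _ (hU0A γ i h))
      · exact Finset.mem_union_left _ (Finset.mem_union_right _ (hσA1 y (hU0A γ i hy)))
    · by_cases h1 : γ ∈ p1.A
      · rw [hbF γ h0 h1 i]
        intro x hx
        rcases bndF γ i x hx with rfl | h | ⟨h, _⟩
        · exact hεmemA
        · exact Finset.mem_union_left _ (Finset.mem_union_right _ (hU1A γ i h))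
        · exact Finset.mem_union_left _ (Finset.mem_union_left _ h)
      · have hγε : γ = ε := by
          rcases Finset.mem_union.mp hγ with h | h
          · rcases Finset.mem_union.mp h with h | h
            · exact absurd h h0
            · exact absurd h h1
          · exact Finset.mem_singleton.mp h
        rw [hγε, hbe i hi]
        intro x hx
        rw [Finset.mem_singleton] at hx
        rw [hx]
        exact hεmemA
  · -- P2_mono
    intro γ hγ i h1i hin
    by_cases h0 : γ ∈ p0.A
    · rw [hbA γ h0 i, hbA γ h0 (i-1)]
      exact monoA γ i γ (i-1) (hchain0 γ (i-1) i (Nat.sub_le i 1) hin)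
    · by_cases h1 : γ ∈ p1.A
      · rw [hbF γ h0 h1 i, hbF γ h0 h1 (i-1)]
        exact monoF γ i γ (i-1) (hchain1 γ (i-1) i (Nat.sub_le i 1) hin)
      · have hγε : γ = ε := by
          rcases Finset.mem_union.mp hγ with h | h
          · rcases Finset.mem_union.mp h with h | h
            · exact absurd h h0
            · exact absurd h h1
          · exact Finset.mem_singleton.mp h
        rw [hγε, hbe i hin, hbe (i-1) (lt_of_le_of_lt (Nat.sub_le i 1) hin)]
  · -- P3
    intro α hαA β hβA i hin hβU hsub
    by_cases hαε : α = ε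
    · subst hαε
      rw [hbe i hin, Finset.mem_singleton] at hβU
      exact le_of_eq hβU
    by_cases hβε : β = ε
    · exfalso
      subst hβε
      have hαin := hself α hαA i hin
      have := hsub hαin
      rw [hbe 0 hn0pos, Finset.mem_singleton] at this
      exact hαε this
    have hα01 : α ∈ p0.A ∨ α ∈ p1.A := by
      rcases Finset.mem_union.mp hαA with h | h
      · exact (Finset.mem_union.mp h)
      · exact absurd (Finset.mem_singleton.mp h) hαε
    have hβ01 : β ∈ p0.A ∨ β ∈ p1.A := by
      rcases Finset.mem_union.mp hβA with h | h
      · exact (Finset.mem_union.mp h)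
      · exact absurd (Finset.mem_singleton.mp h) hβε
    by_cases hβ0 : β ∈ p0.A
    · by_cases hα0 : α ∈ p0.A
      · -- Case 1 : both in A0
        rw [hbA α hα0 i] at hβU
        have hβ0U : β ∈ p0.U α i := RA0 α i β hβU hβ0
        have hs0 : p0.U α i ⊆ p0.U β 0 := by
          intro x hx
          have hx1 := hsub (by
            rw [hbA α hα0 i]
            exact AmalgAux.mem_Aform.mpr (Or.inl hx))
          rw [hbA β hβ0 0] at hx1
          exact RA0 β 0 x hx1 (hU0A α i hx)
        exact p0.P3 α hα0 β hβ0 i hin hβ0U hs0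
      · -- Case 3 : α ∈ A1 \ A0, β ∈ A0
        have hα1 : α ∈ p1.A := hα01.resolve_left hα0
        rw [hbF α hα0 hα1 i] at hβU
        have hξ0ltα : ξ0 < α := hsep2 ξ0 hξ0 α (Finset.mem_sdiff.mpr ⟨hα1, hα0⟩)
        rcases AmalgAux.mem_Fform.mp hβU with h | ⟨δ, hδ, l, hl, hc, h⟩ | ⟨hc, h⟩ | ⟨hc, h⟩
        · have hβ1 : β ∈ p1.A := hU1A α i h
          have hβξ : β < ξ0 := hsep1 β (Finset.mem_inter.mpr ⟨hβ0, hβ1⟩) ξ0 hξ0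
          exact le_of_lt (hβξ.trans hξ0ltα)
        · have hsδ : p0.U δ l ⊆ p0.U β 0 := by
            intro x hx
            have hx1 := hsub (by
              rw [hbF α hα0 hα1 i]
              exact AmalgAux.mem_Fform.mpr (Or.inr (Or.inl ⟨δ, hδ, l, hl, hc, hx⟩)))
            rw [hbA β hβ0 0] at hx1
            exact RA0 β 0 x hx1 (hU0A δ l hx)
          have hβδ := p0.P3 δ hδ.1 β hβ0 l hl h hsδ
          have hδξ : δ < ξ0 := hsep1 δ (Finset.mem_inter.mpr hδ) ξ0 hξ0
          exact le_of_lt (lt_of_le_of_lt hβδ (hδξ.trans hξ0ltα))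
        · rw [h]
          exact le_of_lt hξ0ltα
        · exact absurd (h ▸ hβ0) hεA0
    · -- β ∈ A1 \ A0
      have hβ1 : β ∈ p1.A := hβ01.resolve_left hβ0
      have hβ1' := hβ1
      rw [← himg] at hβ1'
      obtain ⟨b, hb0, hbσ⟩ := Finset.mem_image.mp hβ1'
      have hbA1 : b ∉ p1.A := by
        intro hbin
        have hbfix : σ b = b := hfix b (Finset.mem_inter.mpr ⟨hb0, hbin⟩)
        rw [hbfix] at hbσ
        exact hβ0 (hbσ ▸ hb0)
      by_cases hα0 : α ∈ p0.A
      · -- Case 2 : α ∈ A0, β ∈ A1 \ A0 : impossible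
        exfalso
        rw [hbA α hα0 i] at hβU
        have hsubF : ∀ x, x ∈ AmalgAux.newU p0 p1 σ ξ0 ξ1 k m ε α i →
            x ∈ AmalgAux.Fform p0 p1 ξ0 ξ1 k m ε β 0 := by
          intro x hx
          have := hsub hx
          rwa [hbF β hβ0 hβ1 0] at this
        have hres : ∀ x, x ∈ AmalgAux.Fform p0 p1 ξ0 ξ1 k m ε β 0 →
            x ∈ p0.A → x ∈ p0.U b 0 := by
          intro x hx hxA
          apply RF0 b hb0 0 hn0pos x _ hxA
          rw [hbσ]
          exact hx
        have hU1β0 : p1.U β 0 = (p0.U b 0).image σ := by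
          rw [← hbσ]; exact hI2 b hb0 0 hn0pos
        rcases AmalgAux.mem_Aform.mp hβU with h | ⟨δ, hδ, l, hl, hc, h⟩ | ⟨hc, h | h⟩
        · exact hβ0 (hU0A α i h)
        · rw [Finset.mem_image] at h
          obtain ⟨y, hy, hyβ⟩ := h
          have hyb : y = b := hinj y (hU0A δ l hy) b hb0 (hyβ.trans hbσ.symm)
          have hbδ : b ∈ p0.U δ l := hyb ▸ hy
          have hsδ : p0.U δ l ⊆ p0.U b 0 := by
            intro x hx
            apply hres x _ (hU0A δ l hx)
            apply hsubF
            rw [hbA α hα0 i]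
            exact AmalgAux.mem_Aform.mpr (Or.inl (hc hx))
          have hble := p0.P3 δ hδ.1 b hb0 l hl hbδ hsδ
          have hδb : δ < b := hsep1 δ (Finset.mem_inter.mpr hδ) b (Finset.mem_sdiff.mpr ⟨hb0, hbA1⟩)
          exact absurd hble (not_le.mpr hδb)
        · -- β ∈ U1 ξ1 k
          rw [hU1ξ1 k hkn, Finset.mem_image] at h
          obtain ⟨y, hy, hyβ⟩ := h
          have hyb : y = b := hinj y (hU0A ξ0 k hy) b hb0 (hyβ.trans hbσ.symm)
          have hbk : b ∈ p0.U ξ0 k := hyb ▸ hy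
          by_cases hbξ : b = ξ0
          · have hβξ1 : β = ξ1 := by rw [← hbσ, hbξ, ← hξ1]
            have hεin : ε ∈ AmalgAux.newU p0 p1 σ ξ0 ξ1 k m ε α i := by
              rw [hbA α hα0 i]
              exact (epsA α i).mpr hc
            have hεF := (epsF β 0).mp (hsubF ε hεin)
            apply hεF.2 0 hn0pos
            rw [hβξ1]
          · have hbin : b ∈ AmalgAux.newU p0 p1 σ ξ0 ξ1 k m ε α i := by
              rw [hbA α hα0 i]
              exact AmalgAux.mem_Aform.mpr (Or.inl (hc hbk))
            rcases AmalgAux.mem_Fform.mp (hsubF b hbin) with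
              h' | ⟨δ, hδ, l, hl, hc', h'⟩ | ⟨_, h'⟩ | ⟨_, h'⟩
            · exact hbA1 (hU1A β 0 h')
            · have hc'' : p0.U δ l ⊆ p0.U b 0 := by
                apply himgsub _ _ (hU0A δ l) (hU0A b 0)
                rw [← hT1 δ hδ.1 hδ.2 l hl, ← hU1β0]
                exact hc'
              have := p0.P3 δ hδ.1 b hb0 l hl h' hc''
              exact absurd this
                (not_le.mpr (hsep1 δ (Finset.mem_inter.mpr hδ) b (Finset.mem_sdiff.mpr ⟨hb0, hbA1⟩)))
            · exact hbξ h'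
            · exact hεA0 (h' ▸ hb0)
        · exact hβε h
      · -- Case 4 : both in A1 \ A0 (α ∉ A0)
        have hα1 : α ∈ p1.A := hα01.resolve_left hα0
        rw [hbF α hα0 hα1 i] at hβU
        have hβ1U : β ∈ p1.U α i := RF1 α i β hβU hβ1
        have hs1 : p1.U α i ⊆ p1.U β 0 := by
          intro x hx
          have hx1 := hsub (by
            rw [hbF α hα0 hα1 i]
            exact AmalgAux.mem_Fform.mpr (Or.inl hx))
          rw [hbF β hβ0 hβ1 0] at hx1
          exact RF1 β 0 x hx1 (hU1A α i hx)
        exact p1.P3 α hα1 β hβ1 i (hn01 ▸ hin) hβ1U hs1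
  · -- Cond.le p p0
    refine ⟨fun x hx => Finset.mem_union_left _ (Finset.mem_union_left _ hx), le_refl _, ?_, ?_, ?_⟩
    · intro α hα i hi
      show p0.U α i = AmalgAux.newU p0 p1 σ ξ0 ξ1 k m ε α i ∩ p0.A
      rw [hbA α hα i]
      ext x
      rw [Finset.mem_inter]
      constructor
      · intro hx
        exact ⟨AmalgAux.mem_Aform.mpr (Or.inl hx), hU0A α i hx⟩
      · rintro ⟨h1, h2⟩
        exact RA0 α i x h1 h2
    · intro α hα i hi β hβ j hj hd
      show AmalgAux.newU p0 p1 σ ξ0 ξ1 k m ε α i ∩ AmalgAux.newU p0 p1 σ ξ0 ξ1 k m ε β j = ∅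
      rw [hbA α hα i, hbA β hβ j]
      have hd' : ∀ y, y ∈ p0.U α i → y ∈ p0.U β j → False := by
        intro y hy1 hy2
        have : y ∈ p0.U α i ∩ p0.U β j := Finset.mem_inter.mpr ⟨hy1, hy2⟩
        rw [hd] at this
        exact Finset.notMem_empty y this
      rw [Finset.eq_empty_iff_forall_notMem]
      intro x hx
      rw [Finset.mem_inter] at hx
      obtain ⟨hx1, hx2⟩ := hx
      by_cases hxε : x = ε
      · subst hxε
        have c1 := (epsA α i).mp hx1
        have c2 := (epsA β j).mp hx2
        exact hd' ξ0 (c1 (p0.P2_self ξ0 hξ0A0 k hkn)) (c2 (p0.P2_self ξ0 hξ0A0 k hkn))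
      · rcases bndA α i x hx1 with h1 | h1 | ⟨y, hy, hyx⟩
        · exact hxε h1
        · rcases bndA β j x hx2 with h2 | h2 | ⟨y', hy', hyx'⟩
          · exact hxε h2
          · exact hd' x h1 h2
          · have : x ∈ (p0.U β j).image σ := by
              rw [hyx']; exact Finset.mem_image_of_mem σ hy'
            exact hd' x h1 (hA0img (p0.U β j) (hU0A β j) x this (hU0A α i h1))
        · rcases bndA β j x hx2 with h2 | h2 | ⟨y', hy', hyx'⟩
          · exact hxε h2
          · have : x ∈ (p0.U α i).image σ := by
              rw [hyx]; exact Finset.mem_image_of_mem σ hy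
            exact hd' x (hA0img (p0.U α i) (hU0A α i) x this (hU0A β j h2)) h2
          · have hyy : y = y' :=
              hinj y (hU0A α i hy) y' (hU0A β j hy') (hyx.symm.trans hyx')
            exact hd' y hy (hyy ▸ hy')
    · intro α hα i hi β hβ j hj hs
      show AmalgAux.newU p0 p1 σ ξ0 ξ1 k m ε α i ⊆ AmalgAux.newU p0 p1 σ ξ0 ξ1 k m ε β j
      rw [hbA α hα i, hbA β hβ j]
      exact monoA α i β j hs
  · -- Cond.le p p1
    refine ⟨fun x hx => Finset.mem_union_left _ (Finset.mem_union_right _ hx),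
      le_of_eq hn01.symm, ?_, ?_, ?_⟩
    · intro α hα i hi
      have hi' : i < p0.n := hn01 ▸ hi
      show p1.U α i = AmalgAux.newU p0 p1 σ ξ0 ξ1 k m ε α i ∩ p1.A
      rw [hbF1 α hα i hi']
      ext x
      rw [Finset.mem_inter]
      constructor
      · intro hx
        exact ⟨AmalgAux.mem_Fform.mpr (Or.inl hx), hU1A α i hx⟩
      · rintro ⟨h1, h2⟩
        exact RF1 α i x h1 h2
    · intro α hα i hi β hβ j hj hd
      have hi' : i < p0.n := hn01 ▸ hi
      have hj' : j < p0.n := hn01 ▸ hj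
      show AmalgAux.newU p0 p1 σ ξ0 ξ1 k m ε α i ∩ AmalgAux.newU p0 p1 σ ξ0 ξ1 k m ε β j = ∅
      rw [hbF1 α hα i hi', hbF1 β hβ j hj']
      have hd' : ∀ y, y ∈ p1.U α i → y ∈ p1.U β j → False := by
        intro y hy1 hy2
        have : y ∈ p1.U α i ∩ p1.U β j := Finset.mem_inter.mpr ⟨hy1, hy2⟩
        rw [hd] at this
        exact Finset.notMem_empty y this
      rw [Finset.eq_empty_iff_forall_notMem]
      intro x hx
      rw [Finset.mem_inter] at hx
      obtain ⟨hx1, hx2⟩ := hx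
      by_cases hxε : x = ε
      · subst hxε
        have c1 := ((epsF α i).mp hx1).1
        have c2 := ((epsF β j).mp hx2).1
        have hξs : ξ1 ∈ p1.U ξ1 k := p1.P2_self ξ1 hξ1A1 k (hn01 ▸ hkn)
        exact hd' ξ1 (c1 hξs) (c2 hξs)
      · rcases bndF α i x hx1 with h1 | h1 | ⟨h1a, h1b⟩
        · exact hxε h1
        · rcases bndF β j x hx2 with h2 | h2 | ⟨h2a, h2b⟩
          · exact hxε h2
          · exact hd' x h1 h2
          · have hfx : σ x = x := hfix x (Finset.mem_inter.mpr ⟨h2a, hU1A α i h1⟩)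
            rw [hfx] at h2b
            exact hd' x h1 h2b
        · rcases bndF β j x hx2 with h2 | h2 | ⟨h2a, h2b⟩
          · exact hxε h2
          · have hfx : σ x = x := hfix x (Finset.mem_inter.mpr ⟨h1a, hU1A β j h2⟩)
            rw [hfx] at h1b
            exact hd' x h1b h2
          · exact hd' (σ x) h1b h2b
    · intro α hα i hi β hβ j hj hs
      have hi' : i < p0.n := hn01 ▸ hi
      have hj' : j < p0.n := hn01 ▸ hj
      show AmalgAux.newU p0 p1 σ ξ0 ξ1 k m ε α i ⊆ AmalgAux.newU p0 p1 σ ξ0 ξ1 k m ε β j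
      rw [hbF1 α hα i hi', hbF1 β hβ j hj']
      exact monoF α i β j hs
  · -- ξ0 ∈ p.U ξ1 m
    show ξ0 ∈ AmalgAux.newU p0 p1 σ ξ0 ξ1 k m ε ξ1 m
    rw [hbF ξ1 hξ1A0 hξ1A1 m]
    exact AmalgAux.mem_Fform.mpr (Or.inr (Or.inr (Or.inl ⟨subset_rfl, rfl⟩)))
  · -- p.U ξ1 m ⊆ p.U ξ1 k
    show AmalgAux.newU p0 p1 σ ξ0 ξ1 k m ε ξ1 m ⊆ AmalgAux.newU p0 p1 σ ξ0 ξ1 k m ε ξ1 k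
    rw [hbF ξ1 hξ1A0 hξ1A1 m, hbF ξ1 hξ1A0 hξ1A1 k]
    exact monoF ξ1 m ξ1 k (hchain1 ξ1 k m hkm.le hmn)
  · -- p.U ξ1 k ⊆ p.U ξ0 k
    show AmalgAux.newU p0 p1 σ ξ0 ξ1 k m ε ξ1 k ⊆ AmalgAux.newU p0 p1 σ ξ0 ξ1 k m ε ξ0 k
    rw [hbF ξ1 hξ1A0 hξ1A1 k, hbA ξ0 hξ0A0 k]
    intro x hx
    rcases AmalgAux.mem_Fform.mp hx with h | ⟨δ, hδ, l, hl, hc, h⟩ | ⟨hc, h⟩ | ⟨hc, h⟩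
    · exact AmalgAux.mem_Aform.mpr (Or.inr (Or.inr ⟨subset_rfl, Or.inl h⟩))
    · have hc' : p0.U δ l ⊆ p0.U ξ0 k := by
        apply himgsub _ _ (hU0A δ l) (hU0A ξ0 k)
        rw [← hT1 δ hδ.1 hδ.2 l hl, ← hU1ξ1 k hkn]
        exact hc
      exact AmalgAux.mem_Aform.mpr (Or.inl (hc' h))
    · rw [h]
      exact AmalgAux.mem_Aform.mpr (Or.inl (p0.P2_self ξ0 hξ0A0 k hkn))
    · rw [h]
      exact AmalgAux.mem_Aform.mpr (Or.inr (Or.inr ⟨subset_rfl, Or.inr rfl⟩))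
end
end

section
/- In the amalgamation setup, for every δ∈D=A0∩A1 and j<n the two defining clauses for U'(δ,j) (taking ε=0 with δ∈A0, and ε=1 with δ∈A1) yield the same set; moreover U'(δ,j)=U0(δ,j)∪U1(δ,j)∪V0(δ,j)∪V1(δ,j). -/
noncomputable section

/-- For `δ ∈ D = A0 ∩ A1` and `j < n` the two defining clauses for `U'(δ,j)` agree, and `U'(δ,j) = U0(δ,j) ∪ U1(δ,j) ∪ V0(δ,j) ∪ V1(δ,j)`. -/
theorem Uprime_welldefined_on_D
    (p0 p1 : Cond) (σ : CtblOrd → CtblOrd)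
    (htw : Twins p0 p1 σ)
    (hsep1 : ∀ x ∈ p0.A ∩ p1.A, ∀ y ∈ p0.A \ p1.A, x < y)
    (hsep2 : ∀ y ∈ p0.A \ p1.A, ∀ z ∈ p1.A \ p0.A, y < z)
    (B : Finset CtblOrd)
    (hB : ∀ b ∈ B, b ∉ p0.A ∪ p1.A)
    (hBcard : B.card = (p0.A ∪ p1.A).card * p0.n)
    (ρ : CtblOrd → ℕ → CtblOrd)
    (hρB : ∀ α ∈ p0.A ∪ p1.A, ∀ i < p0.n, ρ α i ∈ B)
    (hρinj : ∀ α ∈ p0.A ∪ p1.A, ∀ α' ∈ p0.A ∪ p1.A, ∀ i < p0.n, ∀ i' < p0.n,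
      ρ α i = ρ α' i' → α = α' ∧ i = i')
    (hρsurj : ∀ b ∈ B, ∃ α ∈ p0.A ∪ p1.A, ∃ i < p0.n, ρ α i = b)
    (ex : CtblOrd → CtblOrd)
    (hex0 : ∀ α ∈ p0.A, ex α = σ α)
    (hex1 : ∀ α ∈ p0.A, ex (σ α) = α)
    (sm : CtblOrd → CtblOrd)
    (hsm0 : ∀ α ∈ p0.A, sm α = α)
    (hsm1 : ∀ α ∈ p0.A, sm (σ α) = α)
    (V0 V1 W0 W1 : CtblOrd → ℕ → Finset CtblOrd)
    (hV0 : ∀ β j x, x ∈ V0 β j ↔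
      ∃ α ∈ p0.A, ∃ i < p0.n, ρ α i = x ∧ p0.U α i ⊆ p0.U β j)
    (hV1 : ∀ β j x, x ∈ V1 β j ↔
      ∃ α ∈ p1.A, ∃ i < p0.n, ρ α i = x ∧ p1.U α i ⊆ p1.U β j)
    (hW0 : ∀ β j x, x ∈ W0 β j ↔
      ∃ α ∈ p1.A, ∃ i < p0.n, ρ α i = x ∧
        ∃ γ ∈ p0.A ∩ p1.A, ∃ l < p0.n, p1.U α i ⊆ p1.U γ l ∧ p0.U γ l ⊆ p0.U β j)
    (hW1 : ∀ β j x, x ∈ W1 β j ↔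
      ∃ α ∈ p0.A, ∃ i < p0.n, ρ α i = x ∧
        ∃ γ ∈ p0.A ∩ p1.A, ∃ l < p0.n, p0.U α i ⊆ p0.U γ l ∧ p1.U γ l ⊆ p1.U β j)
    :
    ∀ δ ∈ p0.A ∩ p1.A, ∀ j < p0.n,
      p0.U δ j ∪ p1.U (ex δ) j ∪ V0 δ j ∪ W0 δ j
        = p1.U δ j ∪ p0.U (ex δ) j ∪ V1 δ j ∪ W1 δ j ∧
      p0.U δ j ∪ p1.U (ex δ) j ∪ V0 δ j ∪ W0 δ j
        = p0.U δ j ∪ p1.U δ j ∪ V0 δ j ∪ V1 δ j := by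

  obtain ⟨hn, hcard, himg, hmono, hid, hI2⟩ := htw
  intro δ hδ j hj
  have hδ0 : δ ∈ p0.A := (Finset.mem_inter.mp hδ).1
  have hσδ : σ δ = δ := hid δ hδ
  have hexδ : ex δ = δ := by rw [hex0 δ hδ0, hσδ]
  have hinj : ∀ a ∈ p0.A, ∀ b ∈ p0.A, σ a = σ b → a = b := by
    intro a ha b hb h
    rcases lt_trichotomy a b with h1 | h1 | h1
    · exact absurd h (ne_of_lt (hmono a ha b hb h1))
    · exact h1
    · exact absurd h.symm (ne_of_lt (hmono b hb a ha h1))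
  have hUδ : p1.U δ j = (p0.U δ j).image σ := by
    have := hI2 δ hδ0 j hj; rwa [hσδ] at this
  have key : ∀ γ ∈ p0.A ∩ p1.A, ∀ l < p0.n,
      (p0.U γ l ⊆ p0.U δ j ↔ p1.U γ l ⊆ p1.U δ j) := by
    intro γ hγ l hl
    have hγ0 : γ ∈ p0.A := (Finset.mem_inter.mp hγ).1
    have hUγ : p1.U γ l = (p0.U γ l).image σ := by
      have := hI2 γ hγ0 l hl; rwa [hid γ hγ] at this
    constructor
    · intro h; rw [hUγ, hUδ]; exact Finset.image_subset_image h
    · intro h x hx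
      have hx0 : x ∈ p0.A := p0.mem_powerset γ hγ0 l hl hx
      have hmem : σ x ∈ p1.U δ j := h (by rw [hUγ]; exact Finset.mem_image_of_mem _ hx)
      rw [hUδ] at hmem
      obtain ⟨y, hy, hyx⟩ := Finset.mem_image.mp hmem
      have hy0 : y ∈ p0.A := p0.mem_powerset δ hδ0 j hj hy
      rwa [hinj y hy0 x hx0 hyx] at hy
  have hW0V1 : W0 δ j = V1 δ j := by
    ext x
    rw [hW0, hV1]
    constructor
    · rintro ⟨α, hα, i, hi, hρx, γ, hγ, l, hl, h1, h2⟩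
      exact ⟨α, hα, i, hi, hρx, h1.trans ((key γ hγ l hl).mp h2)⟩
    · rintro ⟨α, hα, i, hi, hρx, h⟩
      exact ⟨α, hα, i, hi, hρx, δ, hδ, j, hj, h, subset_rfl⟩
  have hW1V0 : W1 δ j = V0 δ j := by
    ext x
    rw [hW1, hV0]
    constructor
    · rintro ⟨α, hα, i, hi, hρx, γ, hγ, l, hl, h1, h2⟩
      exact ⟨α, hα, i, hi, hρx, h1.trans ((key γ hγ l hl).mpr h2)⟩
    · rintro ⟨α, hα, i, hi, hρx, h⟩
      exact ⟨α, hα, i, hi, hρx, δ, hδ, j, hj, h, subset_rfl⟩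
  rw [hexδ, hW0V1, hW1V0]
  refine ⟨?_, rfl⟩
  ext x; simp only [Finset.mem_union]; tauto
end
end

section
/- In the amalgamation setup, if α,β∈A*=A0∪A1, j<n and α∈U'(β,j), then σ̲(α)∈U0(σ̲(β),j), where σ̲ is the smashing function. In fact, for β∈A_ε and j<n one has U'(β,j)∩A* = U_ε(β,j)∪U_{1−ε}(σ*(β),j). -/
noncomputable section

/-- If `α, β ∈ A* = A0 ∪ A1`, `j < n` and `α ∈ U'(β,j)`, then `σ̲(α) ∈ U0(σ̲(β),j)`; indeed for `β ∈ A_ε`, `U'(β,j) ∩ A* = U_ε(β,j) ∪ U_{1-ε}(σ*(β),j)`. -/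
theorem claim_push
    (p0 p1 : Cond) (σ : CtblOrd → CtblOrd)
    (htw : Twins p0 p1 σ)
    (hsep1 : ∀ x ∈ p0.A ∩ p1.A, ∀ y ∈ p0.A \ p1.A, x < y)
    (hsep2 : ∀ y ∈ p0.A \ p1.A, ∀ z ∈ p1.A \ p0.A, y < z)
    (B : Finset CtblOrd)
    (hB : ∀ b ∈ B, b ∉ p0.A ∪ p1.A)
    (hBcard : B.card = (p0.A ∪ p1.A).card * p0.n)
    (ρ : CtblOrd → ℕ → CtblOrd)
    (hρB : ∀ α ∈ p0.A ∪ p1.A, ∀ i < p0.n, ρ α i ∈ B)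
    (hρinj : ∀ α ∈ p0.A ∪ p1.A, ∀ α' ∈ p0.A ∪ p1.A, ∀ i < p0.n, ∀ i' < p0.n,
      ρ α i = ρ α' i' → α = α' ∧ i = i')
    (hρsurj : ∀ b ∈ B, ∃ α ∈ p0.A ∪ p1.A, ∃ i < p0.n, ρ α i = b)
    (ex : CtblOrd → CtblOrd)
    (hex0 : ∀ α ∈ p0.A, ex α = σ α)
    (hex1 : ∀ α ∈ p0.A, ex (σ α) = α)
    (sm : CtblOrd → CtblOrd)
    (hsm0 : ∀ α ∈ p0.A, sm α = α)
    (hsm1 : ∀ α ∈ p0.A, sm (σ α) = α)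
    (V0 V1 W0 W1 : CtblOrd → ℕ → Finset CtblOrd)
    (hV0 : ∀ β j x, x ∈ V0 β j ↔
      ∃ α ∈ p0.A, ∃ i < p0.n, ρ α i = x ∧ p0.U α i ⊆ p0.U β j)
    (hV1 : ∀ β j x, x ∈ V1 β j ↔
      ∃ α ∈ p1.A, ∃ i < p0.n, ρ α i = x ∧ p1.U α i ⊆ p1.U β j)
    (hW0 : ∀ β j x, x ∈ W0 β j ↔
      ∃ α ∈ p1.A, ∃ i < p0.n, ρ α i = x ∧
        ∃ γ ∈ p0.A ∩ p1.A, ∃ l < p0.n, p1.U α i ⊆ p1.U γ l ∧ p0.U γ l ⊆ p0.U β j)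
    (hW1 : ∀ β j x, x ∈ W1 β j ↔
      ∃ α ∈ p0.A, ∃ i < p0.n, ρ α i = x ∧
        ∃ γ ∈ p0.A ∩ p1.A, ∃ l < p0.n, p0.U α i ⊆ p0.U γ l ∧ p1.U γ l ⊆ p1.U β j)
    (U' : CtblOrd → ℕ → Finset CtblOrd)
    (hU'0 : ∀ β ∈ p0.A, ∀ j < p0.n,
      U' β j = p0.U β j ∪ p1.U (ex β) j ∪ V0 β j ∪ W0 β j)
    (hU'1 : ∀ β ∈ p1.A, ∀ j < p0.n,
      U' β j = p1.U β j ∪ p0.U (ex β) j ∪ V1 β j ∪ W1 β j)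
    (hU'B : ∀ α ∈ p0.A ∪ p1.A, ∀ i < p0.n, ∀ j < p0.n, U' (ρ α i) j = {ρ α i})
    :
    (∀ β ∈ p0.A ∪ p1.A, ∀ j < p0.n, ∀ α ∈ p0.A ∪ p1.A,
      α ∈ U' β j → sm α ∈ p0.U (sm β) j) ∧
    (∀ β ∈ p0.A, ∀ j < p0.n, U' β j ∩ (p0.A ∪ p1.A) = p0.U β j ∪ p1.U (ex β) j) ∧
    (∀ β ∈ p1.A, ∀ j < p0.n, U' β j ∩ (p0.A ∪ p1.A) = p1.U β j ∪ p0.U (ex β) j) := by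
  obtain ⟨hn, hcard, himg, hmono, hid, hI2⟩ := htw
  have key0 : ∀ β ∈ p0.A, ∀ j < p0.n,
      U' β j ∩ (p0.A ∪ p1.A) = p0.U β j ∪ p1.U (ex β) j := by
    intro β hβ j hj
    have hσβ : σ β ∈ p1.A := himg ▸ Finset.mem_image_of_mem σ hβ
    have hexβ : ex β = σ β := hex0 β hβ
    rw [hU'0 β hβ j hj]
    ext x
    simp only [Finset.mem_inter, Finset.mem_union]
    constructor
    · rintro ⟨(((h | h) | h) | h), hx⟩
      · exact Or.inl h
      · exact Or.inr h
      · exfalso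
        obtain ⟨a, ha, i, hi, heq, -⟩ := (hV0 β j x).1 h
        exact hB x (heq ▸ hρB a (Finset.mem_union_left _ ha) i hi)
          (by simpa [Finset.mem_union] using hx)
      · exfalso
        obtain ⟨a, ha, i, hi, heq, -⟩ := (hW0 β j x).1 h
        exact hB x (heq ▸ hρB a (Finset.mem_union_right _ ha) i hi)
          (by simpa [Finset.mem_union] using hx)
    · rintro (h | h)
      · exact ⟨Or.inl (Or.inl (Or.inl h)), Or.inl (p0.mem_powerset β hβ j hj h)⟩
      · refine ⟨Or.inl (Or.inl (Or.inr h)), Or.inr ?_⟩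
        rw [hexβ] at h
        exact p1.mem_powerset _ hσβ j (hn ▸ hj) h
  have key1 : ∀ β ∈ p1.A, ∀ j < p0.n,
      U' β j ∩ (p0.A ∪ p1.A) = p1.U β j ∪ p0.U (ex β) j := by
    intro β hβ j hj
    obtain ⟨β', hβ', hσβ'⟩ := Finset.mem_image.1 (himg ▸ hβ : β ∈ p0.A.image σ)
    have hexβ : ex β = β' := by rw [← hσβ']; exact hex1 β' hβ'
    rw [hU'1 β hβ j hj]
    ext x
    simp only [Finset.mem_inter, Finset.mem_union]
    constructor
    · rintro ⟨(((h | h) | h) | h), hx⟩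
      · exact Or.inl h
      · exact Or.inr h
      · exfalso
        obtain ⟨a, ha, i, hi, heq, -⟩ := (hV1 β j x).1 h
        exact hB x (heq ▸ hρB a (Finset.mem_union_right _ ha) i hi)
          (by simpa [Finset.mem_union] using hx)
      · exfalso
        obtain ⟨a, ha, i, hi, heq, -⟩ := (hW1 β j x).1 h
        exact hB x (heq ▸ hρB a (Finset.mem_union_left _ ha) i hi)
          (by simpa [Finset.mem_union] using hx)
    · rintro (h | h)
      · exact ⟨Or.inl (Or.inl (Or.inl h)), Or.inr (p1.mem_powerset β hβ j (hn ▸ hj) h)⟩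
      · refine ⟨Or.inl (Or.inl (Or.inr h)), Or.inl ?_⟩
        rw [hexβ] at h
        exact p0.mem_powerset β' hβ' j hj h
  refine ⟨?_, key0, key1⟩
  intro β hβ j hj α hα hmem
  rcases Finset.mem_union.1 hβ with hβ0 | hβ1
  · have hαA : α ∈ U' β j ∩ (p0.A ∪ p1.A) := Finset.mem_inter.2 ⟨hmem, hα⟩
    rw [key0 β hβ0 j hj] at hαA
    rw [hsm0 β hβ0]
    rcases Finset.mem_union.1 hαA with h | h
    · rwa [hsm0 α (p0.mem_powerset β hβ0 j hj h)]
    · rw [hex0 β hβ0, hI2 β hβ0 j hj] at h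
      obtain ⟨α', hα', hσα'⟩ := Finset.mem_image.1 h
      have : sm α = α' := by rw [← hσα']; exact hsm1 α' (p0.mem_powerset β hβ0 j hj hα')
      rwa [this]
  · obtain ⟨β', hβ', hσβ'⟩ := Finset.mem_image.1 (himg ▸ hβ1 : β ∈ p0.A.image σ)
    have hsmβ : sm β = β' := by rw [← hσβ']; exact hsm1 β' hβ'
    have hexβ : ex β = β' := by rw [← hσβ']; exact hex1 β' hβ'
    have hαA : α ∈ U' β j ∩ (p0.A ∪ p1.A) := Finset.mem_inter.2 ⟨hmem, hα⟩
    rw [key1 β hβ1 j hj, hexβ] at hαA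
    rw [hsmβ]
    rcases Finset.mem_union.1 hαA with h | h
    · rw [← hσβ', hI2 β' hβ' j hj] at h
      obtain ⟨α', hα', hσα'⟩ := Finset.mem_image.1 h
      have : sm α = α' := by rw [← hσα']; exact hsm1 α' (p0.mem_powerset β' hβ' j hj hα')
      rwa [this]
    · rwa [hsm0 α (p0.mem_powerset β' hβ' j hj h)]
end
end

section
/- In the amalgamation setup, if (α,i)∈A*×n, β∈A*, j<n and ρ(α,i)∈U'(β,j), then σ̲(α)∈U0(σ̲(β),j), where σ̲ is the smashing function. -/
noncomputable section

/-- If `(α,i) ∈ A* × n`, `β ∈ A*`, `j < n` and `ρ(α,i) ∈ U'(β,j)`, then `σ̲(α) ∈ U0(σ̲(β),j)`. -/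
theorem claim_push2
    (p0 p1 : Cond) (σ : CtblOrd → CtblOrd)
    (htw : Twins p0 p1 σ)
    (hsep1 : ∀ x ∈ p0.A ∩ p1.A, ∀ y ∈ p0.A \ p1.A, x < y)
    (hsep2 : ∀ y ∈ p0.A \ p1.A, ∀ z ∈ p1.A \ p0.A, y < z)
    (B : Finset CtblOrd)
    (hB : ∀ b ∈ B, b ∉ p0.A ∪ p1.A)
    (hBcard : B.card = (p0.A ∪ p1.A).card * p0.n)
    (ρ : CtblOrd → ℕ → CtblOrd)
    (hρB : ∀ α ∈ p0.A ∪ p1.A, ∀ i < p0.n, ρ α i ∈ B)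
    (hρinj : ∀ α ∈ p0.A ∪ p1.A, ∀ α' ∈ p0.A ∪ p1.A, ∀ i < p0.n, ∀ i' < p0.n,
      ρ α i = ρ α' i' → α = α' ∧ i = i')
    (hρsurj : ∀ b ∈ B, ∃ α ∈ p0.A ∪ p1.A, ∃ i < p0.n, ρ α i = b)
    (ex : CtblOrd → CtblOrd)
    (hex0 : ∀ α ∈ p0.A, ex α = σ α)
    (hex1 : ∀ α ∈ p0.A, ex (σ α) = α)
    (sm : CtblOrd → CtblOrd)
    (hsm0 : ∀ α ∈ p0.A, sm α = α)
    (hsm1 : ∀ α ∈ p0.A, sm (σ α) = α)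
    (V0 V1 W0 W1 : CtblOrd → ℕ → Finset CtblOrd)
    (hV0 : ∀ β j x, x ∈ V0 β j ↔
      ∃ α ∈ p0.A, ∃ i < p0.n, ρ α i = x ∧ p0.U α i ⊆ p0.U β j)
    (hV1 : ∀ β j x, x ∈ V1 β j ↔
      ∃ α ∈ p1.A, ∃ i < p0.n, ρ α i = x ∧ p1.U α i ⊆ p1.U β j)
    (hW0 : ∀ β j x, x ∈ W0 β j ↔
      ∃ α ∈ p1.A, ∃ i < p0.n, ρ α i = x ∧
        ∃ γ ∈ p0.A ∩ p1.A, ∃ l < p0.n, p1.U α i ⊆ p1.U γ l ∧ p0.U γ l ⊆ p0.U β j)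
    (hW1 : ∀ β j x, x ∈ W1 β j ↔
      ∃ α ∈ p0.A, ∃ i < p0.n, ρ α i = x ∧
        ∃ γ ∈ p0.A ∩ p1.A, ∃ l < p0.n, p0.U α i ⊆ p0.U γ l ∧ p1.U γ l ⊆ p1.U β j)
    (U' : CtblOrd → ℕ → Finset CtblOrd)
    (hU'0 : ∀ β ∈ p0.A, ∀ j < p0.n,
      U' β j = p0.U β j ∪ p1.U (ex β) j ∪ V0 β j ∪ W0 β j)
    (hU'1 : ∀ β ∈ p1.A, ∀ j < p0.n,
      U' β j = p1.U β j ∪ p0.U (ex β) j ∪ V1 β j ∪ W1 β j)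
    (hU'B : ∀ α ∈ p0.A ∪ p1.A, ∀ i < p0.n, ∀ j < p0.n, U' (ρ α i) j = {ρ α i})
    :
    ∀ α ∈ p0.A ∪ p1.A, ∀ i < p0.n, ∀ β ∈ p0.A ∪ p1.A, ∀ j < p0.n,
      ρ α i ∈ U' β j → sm α ∈ p0.U (sm β) j := by
  obtain ⟨hn, hcard, himg, hmono, hid, hI2⟩ := htw
  have hinj : ∀ a ∈ p0.A, ∀ b ∈ p0.A, σ a = σ b → a = b := by
    intro a ha b hb h
    rcases lt_trichotomy a b with h' | h' | h'
    · exact absurd h (ne_of_lt (hmono a ha b hb h'))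
    · exact h'
    · exact absurd h.symm (ne_of_lt (hmono b hb a ha h'))
  intro α hα i hi β hβ j hj hmem
  have hρ := hρB α hα i hi
  have hρnot := hB _ hρ
  have hj1 : j < p1.n := hn ▸ hj
  have hi1 : i < p1.n := hn ▸ hi
  rcases Finset.mem_union.mp hβ with hβ0 | hβ1
  · rw [hU'0 β hβ0 j hj] at hmem
    have hexβ : ex β = σ β := hex0 β hβ0
    have hσβ : σ β ∈ p1.A := by rw [← himg]; exact Finset.mem_image_of_mem σ hβ0
    rcases Finset.mem_union.mp hmem with hm | hW
    · rcases Finset.mem_union.mp hm with hm' | hV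
      · rcases Finset.mem_union.mp hm' with h1 | h2
        · exact absurd (Finset.mem_union_left _ (p0.mem_powerset β hβ0 j hj h1)) hρnot
        · rw [hexβ] at h2
          exact absurd (Finset.mem_union_right _ (p1.mem_powerset _ hσβ j hj1 h2)) hρnot
      · obtain ⟨α', hα', i', hi', heq, hsub⟩ := (hV0 β j _).mp hV
        obtain ⟨rfl, rfl⟩ := hρinj α hα α' (Finset.mem_union_left _ hα') i hi i' hi' heq.symm
        rw [hsm0 α hα', hsm0 β hβ0]
        exact hsub (p0.P2_self α hα' i hi)
    · obtain ⟨α', hα', i', hi', heq, γ, hγ, l, hl, h1, h2⟩ := (hW0 β j _).mp hW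
      obtain ⟨rfl, rfl⟩ := hρinj α hα α' (Finset.mem_union_right _ hα') i hi i' hi' heq.symm
      have hα1 : α ∈ p0.A.image σ := by rw [himg]; exact hα'
      obtain ⟨α₀, hα₀, hσα₀⟩ := Finset.mem_image.mp hα1
      have hγ0 : γ ∈ p0.A := (Finset.mem_inter.mp hγ).1
      have hγ1 : γ ∈ p1.A := (Finset.mem_inter.mp hγ).2
      have hσγ : σ γ = γ := hid γ hγ
      have hUγ : p1.U γ l = (p0.U γ l).image σ := by
        conv_lhs => rw [← hσγ]
        exact hI2 γ hγ0 l hl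
      have hself : α ∈ p1.U α i := p1.P2_self α hα' i hi1
      have hmem2 : α ∈ (p0.U γ l).image σ := by rw [← hUγ]; exact h1 hself
      obtain ⟨x, hx, hσx⟩ := Finset.mem_image.mp hmem2
      have hx0 : x ∈ p0.A := p0.mem_powerset γ hγ0 l hl hx
      have hxα₀ : x = α₀ := hinj x hx0 α₀ hα₀ (by rw [hσx, hσα₀])
      rw [← hσα₀, hsm1 α₀ hα₀, hsm0 β hβ0]
      exact h2 (hxα₀ ▸ hx)
  · rw [hU'1 β hβ1 j hj] at hmem
    have hβi : β ∈ p0.A.image σ := by rw [himg]; exact hβ1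
    obtain ⟨β₀, hβ₀, hσβ₀⟩ := Finset.mem_image.mp hβi
    have hexβ : ex β = β₀ := by rw [← hσβ₀]; exact hex1 β₀ hβ₀
    have hsmβ : sm β = β₀ := by rw [← hσβ₀]; exact hsm1 β₀ hβ₀
    have hUβ : p1.U β j = (p0.U β₀ j).image σ := by rw [← hσβ₀]; exact hI2 β₀ hβ₀ j hj
    rcases Finset.mem_union.mp hmem with hm | hW
    · rcases Finset.mem_union.mp hm with hm' | hV
      · rcases Finset.mem_union.mp hm' with h1 | h2
        · exact absurd (Finset.mem_union_right _ (p1.mem_powerset β hβ1 j hj1 h1)) hρnot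
        · rw [hexβ] at h2
          exact absurd (Finset.mem_union_left _ (p0.mem_powerset _ hβ₀ j hj h2)) hρnot
      · obtain ⟨α', hα', i', hi', heq, hsub⟩ := (hV1 β j _).mp hV
        obtain ⟨rfl, rfl⟩ := hρinj α hα α' (Finset.mem_union_right _ hα') i hi i' hi' heq.symm
        have hα1 : α ∈ p0.A.image σ := by rw [himg]; exact hα'
        obtain ⟨α₀, hα₀, hσα₀⟩ := Finset.mem_image.mp hα1
        have hself : α ∈ p1.U α i := p1.P2_self α hα' i hi1
        have hmem2 : α ∈ (p0.U β₀ j).image σ := by rw [← hUβ]; exact hsub hself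
        obtain ⟨x, hx, hσx⟩ := Finset.mem_image.mp hmem2
        have hx0 : x ∈ p0.A := p0.mem_powerset β₀ hβ₀ j hj hx
        have hxα₀ : x = α₀ := hinj x hx0 α₀ hα₀ (by rw [hσx, hσα₀])
        rw [← hσα₀, hsm1 α₀ hα₀, hsmβ]
        exact hxα₀ ▸ hx
    · obtain ⟨α', hα', i', hi', heq, γ, hγ, l, hl, h1, h2⟩ := (hW1 β j _).mp hW
      obtain ⟨rfl, rfl⟩ := hρinj α hα α' (Finset.mem_union_left _ hα') i hi i' hi' heq.symm
      have hγ0 : γ ∈ p0.A := (Finset.mem_inter.mp hγ).1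
      have hσγ : σ γ = γ := hid γ hγ
      have hUγ : p1.U γ l = (p0.U γ l).image σ := by
        conv_lhs => rw [← hσγ]
        exact hI2 γ hγ0 l hl
      have hαγ : α ∈ p0.U γ l := h1 (p0.P2_self α hα' i hi)
      have hσαmem : σ α ∈ p1.U γ l := by
        rw [hUγ]; exact Finset.mem_image_of_mem σ hαγ
      have hmem2 : σ α ∈ (p0.U β₀ j).image σ := by rw [← hUβ]; exact h2 hσαmem
      obtain ⟨x, hx, hσx⟩ := Finset.mem_image.mp hmem2
      have hx0 : x ∈ p0.A := p0.mem_powerset β₀ hβ₀ j hj hx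
      have hxα : x = α := hinj x hx0 α hα' hσx
      rw [hsm0 α hα', hsmβ]
      exact hxα ▸ hx
end
end

section
/- In the amalgamation setup, the triple p'=(A,n,U') is a condition, i.e. p'∈P: it satisfies (P2) (each z∈A lies in U'(z,i) for all i<n, and U'(z,i)⊆U'(z,i−1) for 1≤i<n) and (P3) (for z,w∈A and i<n, if w∈U'(z,i) and U'(z,i)⊆U'(w,0) then w≤z). -/
noncomputable section

/-- The triple `p' = ⟨A, n, U'⟩` is a condition, i.e. `p' ∈ P`: `U'` maps `A × n` into `𝒫(A)` and satisfies (P2) and (P3). -/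
theorem claim_pprime_in_P
    (p0 p1 : Cond) (σ : CtblOrd → CtblOrd)
    (htw : Twins p0 p1 σ)
    (hsep1 : ∀ x ∈ p0.A ∩ p1.A, ∀ y ∈ p0.A \ p1.A, x < y)
    (hsep2 : ∀ y ∈ p0.A \ p1.A, ∀ z ∈ p1.A \ p0.A, y < z)
    (B : Finset CtblOrd)
    (hB : ∀ b ∈ B, b ∉ p0.A ∪ p1.A)
    (hBcard : B.card = (p0.A ∪ p1.A).card * p0.n)
    (ρ : CtblOrd → ℕ → CtblOrd)
    (hρB : ∀ α ∈ p0.A ∪ p1.A, ∀ i < p0.n, ρ α i ∈ B)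
    (hρinj : ∀ α ∈ p0.A ∪ p1.A, ∀ α' ∈ p0.A ∪ p1.A, ∀ i < p0.n, ∀ i' < p0.n,
      ρ α i = ρ α' i' → α = α' ∧ i = i')
    (hρsurj : ∀ b ∈ B, ∃ α ∈ p0.A ∪ p1.A, ∃ i < p0.n, ρ α i = b)
    (ex : CtblOrd → CtblOrd)
    (hex0 : ∀ α ∈ p0.A, ex α = σ α)
    (hex1 : ∀ α ∈ p0.A, ex (σ α) = α)
    (sm : CtblOrd → CtblOrd)
    (hsm0 : ∀ α ∈ p0.A, sm α = α)
    (hsm1 : ∀ α ∈ p0.A, sm (σ α) = α)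
    (V0 V1 W0 W1 : CtblOrd → ℕ → Finset CtblOrd)
    (hV0 : ∀ β j x, x ∈ V0 β j ↔
      ∃ α ∈ p0.A, ∃ i < p0.n, ρ α i = x ∧ p0.U α i ⊆ p0.U β j)
    (hV1 : ∀ β j x, x ∈ V1 β j ↔
      ∃ α ∈ p1.A, ∃ i < p0.n, ρ α i = x ∧ p1.U α i ⊆ p1.U β j)
    (hW0 : ∀ β j x, x ∈ W0 β j ↔
      ∃ α ∈ p1.A, ∃ i < p0.n, ρ α i = x ∧
        ∃ γ ∈ p0.A ∩ p1.A, ∃ l < p0.n, p1.U α i ⊆ p1.U γ l ∧ p0.U γ l ⊆ p0.U β j)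
    (hW1 : ∀ β j x, x ∈ W1 β j ↔
      ∃ α ∈ p0.A, ∃ i < p0.n, ρ α i = x ∧
        ∃ γ ∈ p0.A ∩ p1.A, ∃ l < p0.n, p0.U α i ⊆ p0.U γ l ∧ p1.U γ l ⊆ p1.U β j)
    (U' : CtblOrd → ℕ → Finset CtblOrd)
    (hU'0 : ∀ β ∈ p0.A, ∀ j < p0.n,
      U' β j = p0.U β j ∪ p1.U (ex β) j ∪ V0 β j ∪ W0 β j)
    (hU'1 : ∀ β ∈ p1.A, ∀ j < p0.n,
      U' β j = p1.U β j ∪ p0.U (ex β) j ∪ V1 β j ∪ W1 β j)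
    (hU'B : ∀ α ∈ p0.A ∪ p1.A, ∀ i < p0.n, ∀ j < p0.n, U' (ρ α i) j = {ρ α i})
    :
    (∀ z ∈ (p0.A ∪ p1.A) ∪ B, ∀ i < p0.n, U' z i ⊆ (p0.A ∪ p1.A) ∪ B) ∧
    (∀ z ∈ (p0.A ∪ p1.A) ∪ B, ∀ i < p0.n, z ∈ U' z i) ∧
    (∀ z ∈ (p0.A ∪ p1.A) ∪ B, ∀ i, 1 ≤ i → i < p0.n → U' z i ⊆ U' z (i - 1)) ∧
    (∀ z ∈ (p0.A ∪ p1.A) ∪ B, ∀ w ∈ (p0.A ∪ p1.A) ∪ B, ∀ i < p0.n,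
      w ∈ U' z i → U' z i ⊆ U' w 0 → w ≤ z) := by
  obtain ⟨hn, hcard, hσA, hmono, hid, hI2⟩ := htw
  have hσmem : ∀ a ∈ p0.A, σ a ∈ p1.A := by
    intro a ha; rw [← hσA]; exact Finset.mem_image_of_mem σ ha
  have hinj : ∀ a ∈ p0.A, ∀ b ∈ p0.A, σ a = σ b → a = b := by
    intro a ha b hb h
    rcases lt_trichotomy a b with h1 | h1 | h1
    · exact absurd h (ne_of_lt (hmono a ha b hb h1))
    · exact h1
    · exact absurd h.symm (ne_of_lt (hmono b hb a ha h1))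
  have hBnot : ∀ x ∈ B, x ∉ p0.A ∧ x ∉ p1.A := by
    intro x hx
    have := hB x hx
    rw [Finset.mem_union] at this
    exact ⟨fun h => this (Or.inl h), fun h => this (Or.inr h)⟩
  have hV0B : ∀ β j, ∀ x ∈ V0 β j, x ∈ B := by
    intro β j x hx
    rw [hV0] at hx
    obtain ⟨α, hα, i, hi, hρ, -⟩ := hx
    exact hρ ▸ hρB α (Finset.mem_union_left _ hα) i hi
  have hV1B : ∀ β j, ∀ x ∈ V1 β j, x ∈ B := by
    intro β j x hx
    rw [hV1] at hx
    obtain ⟨α, hα, i, hi, hρ, -⟩ := hx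
    exact hρ ▸ hρB α (Finset.mem_union_right _ hα) i hi
  have hW0B : ∀ β j, ∀ x ∈ W0 β j, x ∈ B := by
    intro β j x hx
    rw [hW0] at hx
    obtain ⟨α, hα, i, hi, hρ, -⟩ := hx
    exact hρ ▸ hρB α (Finset.mem_union_right _ hα) i hi
  have hW1B : ∀ β j, ∀ x ∈ W1 β j, x ∈ B := by
    intro β j x hx
    rw [hW1] at hx
    obtain ⟨α, hα, i, hi, hρ, -⟩ := hx
    exact hρ ▸ hρB α (Finset.mem_union_left _ hα) i hi
  -- restriction lemmas
  have hR0 : ∀ z ∈ p0.A, ∀ j < p0.n, ∀ x ∈ U' z j, x ∈ p0.A → x ∈ p0.U z j := by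
    intro z hz j hj x hx hx0
    rw [hU'0 z hz j hj] at hx
    simp only [Finset.mem_union] at hx
    rcases hx with ((h | h) | h) | h
    · exact h
    · rw [hex0 z hz] at h
      have hx1 : x ∈ p1.A := p1.mem_powerset (σ z) (hσmem z hz) j (hn ▸ hj) h
      rw [hI2 z hz j hj] at h
      obtain ⟨u, hu, huσ⟩ := Finset.mem_image.mp h
      have hu0 : u ∈ p0.A := p0.mem_powerset z hz j hj hu
      have hσx : σ x = x := hid x (Finset.mem_inter.mpr ⟨hx0, hx1⟩)
      have : u = x := hinj u hu0 x hx0 (huσ.trans hσx.symm)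
      exact this ▸ hu
    · exact absurd hx0 (hBnot x (hV0B z j x h)).1
    · exact absurd hx0 (hBnot x (hW0B z j x h)).1
  have hR1 : ∀ z ∈ p1.A, ∀ j < p0.n, ∀ x ∈ U' z j, x ∈ p1.A → x ∈ p1.U z j := by
    intro z hz j hj x hx hx1
    obtain ⟨a, ha, haσ⟩ := Finset.mem_image.mp (hσA ▸ hz : z ∈ p0.A.image σ)
    have hexz : ex z = a := by rw [← haσ]; exact hex1 a ha
    rw [hU'1 z hz j hj] at hx
    simp only [Finset.mem_union] at hx
    rcases hx with ((h | h) | h) | h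
    · exact h
    · rw [hexz] at h
      have hx0 : x ∈ p0.A := p0.mem_powerset a ha j hj h
      have hσx : σ x = x := hid x (Finset.mem_inter.mpr ⟨hx0, hx1⟩)
      have : σ x ∈ p1.U (σ a) j := by
        rw [hI2 a ha j hj]; exact Finset.mem_image_of_mem σ h
      rw [hσx, haσ] at this
      exact this
    · exact absurd hx1 (hBnot x (hV1B z j x h)).2
    · exact absurd hx1 (hBnot x (hW1B z j x h)).2
  -- part 2 (needed in part 4)
  have hself : ∀ z ∈ (p0.A ∪ p1.A) ∪ B, ∀ i < p0.n, z ∈ U' z i := by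
    intro z hz i hi
    rw [Finset.mem_union, Finset.mem_union] at hz
    rcases hz with (hz | hz) | hz
    · rw [hU'0 z hz i hi]
      exact Finset.mem_union_left _ (Finset.mem_union_left _
        (Finset.mem_union_left _ (p0.P2_self z hz i hi)))
    · rw [hU'1 z hz i hi]
      exact Finset.mem_union_left _ (Finset.mem_union_left _
        (Finset.mem_union_left _ (p1.P2_self z hz i (hn ▸ hi))))
    · obtain ⟨α, hα, k, hk, hρk⟩ := hρsurj z hz
      rw [← hρk, hU'B α hα k hk i hi]
      exact Finset.mem_singleton_self _
  refine ⟨?_, hself, ?_, ?_⟩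
  -- Part 1: U' maps into A ∪ B
  · intro z hz i hi x hx
    rw [Finset.mem_union, Finset.mem_union] at hz
    simp only [Finset.mem_union]
    rcases hz with (hz | hz) | hz
    · rw [hU'0 z hz i hi] at hx
      simp only [Finset.mem_union] at hx
      rcases hx with ((h | h) | h) | h
      · exact Or.inl (Or.inl (p0.mem_powerset z hz i hi h))
      · rw [hex0 z hz] at h
        exact Or.inl (Or.inr (p1.mem_powerset (σ z) (hσmem z hz) i (hn ▸ hi) h))
      · exact Or.inr (hV0B z i x h)
      · exact Or.inr (hW0B z i x h)
    · obtain ⟨a, ha, haσ⟩ := Finset.mem_image.mp (hσA ▸ hz : z ∈ p0.A.image σ)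
      have hexz : ex z = a := by rw [← haσ]; exact hex1 a ha
      rw [hU'1 z hz i hi] at hx
      simp only [Finset.mem_union] at hx
      rcases hx with ((h | h) | h) | h
      · exact Or.inl (Or.inr (p1.mem_powerset z hz i (hn ▸ hi) h))
      · rw [hexz] at h
        exact Or.inl (Or.inl (p0.mem_powerset a ha i hi h))
      · exact Or.inr (hV1B z i x h)
      · exact Or.inr (hW1B z i x h)
    · obtain ⟨α, hα, k, hk, hρk⟩ := hρsurj z hz
      rw [← hρk, hU'B α hα k hk i hi, Finset.mem_singleton] at hx
      exact Or.inr (hx ▸ hρk ▸ hz)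
  -- Part 3: monotonicity
  · intro z hz i h1 hi
    have hi' : i - 1 < p0.n := lt_of_le_of_lt (Nat.sub_le i 1) hi
    rw [Finset.mem_union, Finset.mem_union] at hz
    rcases hz with (hz | hz) | hz
    · rw [hU'0 z hz i hi, hU'0 z hz (i - 1) hi']
      intro x hx
      simp only [Finset.mem_union] at hx ⊢
      rcases hx with ((h | h) | h) | h
      · exact Or.inl (Or.inl (Or.inl (p0.P2_mono z hz i h1 hi h)))
      · exact Or.inl (Or.inl (Or.inr (p1.P2_mono (ex z)
          (hex0 z hz ▸ hσmem z hz) i h1 (hn ▸ hi) h)))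
      · rw [hV0] at h
        obtain ⟨α, hα, k, hk, hρk, hsub⟩ := h
        exact Or.inl (Or.inr ((hV0 z (i - 1) x).mpr
          ⟨α, hα, k, hk, hρk, hsub.trans (p0.P2_mono z hz i h1 hi)⟩))
      · rw [hW0] at h
        obtain ⟨α, hα, k, hk, hρk, γ, hγ, l, hl, hs1, hs2⟩ := h
        exact Or.inr ((hW0 z (i - 1) x).mpr
          ⟨α, hα, k, hk, hρk, γ, hγ, l, hl, hs1, hs2.trans (p0.P2_mono z hz i h1 hi)⟩)
    · have hz1n : z ∈ p1.A := hz
      have hmono1 : p1.U z i ⊆ p1.U z (i - 1) := p1.P2_mono z hz1n i h1 (hn ▸ hi)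
      obtain ⟨a, ha, haσ⟩ := Finset.mem_image.mp (hσA ▸ hz : z ∈ p0.A.image σ)
      have hexz : ex z = a := by rw [← haσ]; exact hex1 a ha
      rw [hU'1 z hz i hi, hU'1 z hz (i - 1) hi']
      intro x hx
      simp only [Finset.mem_union] at hx ⊢
      rcases hx with ((h | h) | h) | h
      · exact Or.inl (Or.inl (Or.inl (hmono1 h)))
      · rw [hexz] at h ⊢
        exact Or.inl (Or.inl (Or.inr (p0.P2_mono a ha i h1 hi h)))
      · rw [hV1] at h
        obtain ⟨α, hα, k, hk, hρk, hsub⟩ := h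
        exact Or.inl (Or.inr ((hV1 z (i - 1) x).mpr
          ⟨α, hα, k, hk, hρk, hsub.trans hmono1⟩))
      · rw [hW1] at h
        obtain ⟨α, hα, k, hk, hρk, γ, hγ, l, hl, hs1, hs2⟩ := h
        exact Or.inr ((hW1 z (i - 1) x).mpr
          ⟨α, hα, k, hk, hρk, γ, hγ, l, hl, hs1, hs2.trans hmono1⟩)
    · obtain ⟨α, hα, k, hk, hρk⟩ := hρsurj z hz
      rw [← hρk, hU'B α hα k hk i hi, hU'B α hα k hk (i - 1) hi']
  -- Part 4: (P3)
  · intro z hz w hw i hi hwz hsub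
    have hn0 : 0 < p0.n := lt_of_le_of_lt (Nat.zero_le i) hi
    rw [Finset.mem_union] at hz hw
    rcases hz with hz | hzB
    · rcases hw with hw | hwB
      · -- both z and w in A* = A0 ∪ A1
        rw [Finset.mem_union] at hz hw
        by_cases hz0 : z ∈ p0.A
        · by_cases hw0 : w ∈ p0.A
          · -- both in A0: use p0.P3
            have hw' : w ∈ p0.U z i := hR0 z hz0 i hi w hwz hw0
            have hsub' : p0.U z i ⊆ p0.U w 0 := by
              intro x hx
              have hx0 : x ∈ p0.A := p0.mem_powerset z hz0 i hi hx
              have hxU' : x ∈ U' z i := by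
                rw [hU'0 z hz0 i hi]
                exact Finset.mem_union_left _ (Finset.mem_union_left _
                  (Finset.mem_union_left _ hx))
              exact hR0 w hw0 0 hn0 x (hsub hxU') hx0
            exact p0.P3 z hz0 w hw0 i hi hw' hsub'
          · -- w ∈ A1 \ A0
            have hw1 : w ∈ p1.A := hw.resolve_left hw0
            by_cases hz1 : z ∈ p1.A
            · -- both in A1: use p1.P3
              have hw' : w ∈ p1.U z i := hR1 z hz1 i hi w hwz hw1
              have hsub' : p1.U z i ⊆ p1.U w 0 := by
                intro x hx
                have hx1 : x ∈ p1.A := p1.mem_powerset z hz1 i (hn ▸ hi) hx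
                have hxU' : x ∈ U' z i := by
                  rw [hU'1 z hz1 i hi]
                  exact Finset.mem_union_left _ (Finset.mem_union_left _
                    (Finset.mem_union_left _ hx))
                exact hR1 w hw1 0 hn0 x (hsub hxU') hx1
              exact p1.P3 z hz1 w hw1 i (hn ▸ hi) hw' hsub'
            · -- hard case: z ∈ A0 \ A1, w ∈ A1 \ A0
              -- step 1: ρ z i ∈ U' z i via V0
              have hρmem : ρ z i ∈ U' z i := by
                rw [hU'0 z hz0 i hi]
                exact Finset.mem_union_left _ (Finset.mem_union_right _
                  ((hV0 z i (ρ z i)).mpr ⟨z, hz0, i, hi, rfl, subset_rfl⟩))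
              have hρw : ρ z i ∈ U' w 0 := hsub hρmem
              have hρiB : ρ z i ∈ B := hρB z (Finset.mem_union_left _ hz0) i hi
              rw [hU'1 w hw1 0 hn0] at hρw
              simp only [Finset.mem_union] at hρw
              rcases hρw with ((h | h) | h) | h
              · exact absurd (p1.mem_powerset w hw1 0 (hn ▸ hn0) h) (hBnot _ hρiB).2
              · obtain ⟨a, ha, haσ⟩ := Finset.mem_image.mp (hσA ▸ hw1 : w ∈ p0.A.image σ)
                have hexw : ex w = a := by rw [← haσ]; exact hex1 a ha
                rw [hexw] at h
                exact absurd (p0.mem_powerset a ha 0 hn0 h) (hBnot _ hρiB).1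
              · rw [hV1] at h
                obtain ⟨α, hα, k, hk, hρk, -⟩ := h
                have := (hρinj α (Finset.mem_union_right _ hα) z
                  (Finset.mem_union_left _ hz0) k hk i hi hρk).1
                exact absurd (this ▸ hα) hz1
              · rw [hW1] at h
                obtain ⟨α, hα, k, hk, hρk, γ, hγ, l, hl, hs1, hs2⟩ := h
                obtain ⟨hαz, hki⟩ := hρinj α (Finset.mem_union_left _ hα) z
                  (Finset.mem_union_left _ hz0) k hk i hi hρk
                rw [hαz, hki] at hs1
                -- hs1 : p0.U z i ⊆ p0.U γ l, hs2 : p1.U γ l ⊆ p1.U w 0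
                rw [Finset.mem_inter] at hγ
                -- show w ∈ p1.U γ l
                have hwU1 : w ∈ p1.U (σ z) i := by
                  have hwz' := hwz
                  rw [hU'0 z hz0 i hi] at hwz'
                  simp only [Finset.mem_union] at hwz'
                  rcases hwz' with ((h' | h') | h') | h'
                  · exact absurd (p0.mem_powerset z hz0 i hi h') hw0
                  · rwa [hex0 z hz0] at h'
                  · exact absurd (hBnot w (hV0B z i w h')).2 (fun hh => hh hw1)
                  · exact absurd (hBnot w (hW0B z i w h')).2 (fun hh => hh hw1)
                have hwγ : w ∈ p1.U γ l := by
                  rw [hI2 z hz0 i hi] at hwU1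
                  obtain ⟨u, hu, huσ⟩ := Finset.mem_image.mp hwU1
                  have : σ u ∈ p1.U (σ γ) l := by
                    rw [hI2 γ hγ.1 l hl]
                    exact Finset.mem_image_of_mem σ (hs1 hu)
                  rw [huσ, hid γ (Finset.mem_inter.mpr hγ)] at this
                  exact this
                have hle : w ≤ γ := p1.P3 γ hγ.2 w hw1 l (hn ▸ hl) hwγ hs2
                have h1 : γ < z := hsep1 γ (Finset.mem_inter.mpr hγ) z
                  (Finset.mem_sdiff.mpr ⟨hz0, hz1⟩)
                have h2 : z < w := hsep2 z (Finset.mem_sdiff.mpr ⟨hz0, hz1⟩) w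
                  (Finset.mem_sdiff.mpr ⟨hw1, hw0⟩)
                exact absurd hle (not_le.mpr (h1.trans h2))
        · -- z ∈ A1 \ A0
          have hz1 : z ∈ p1.A := hz.resolve_left hz0
          by_cases hw1 : w ∈ p1.A
          · -- both in A1
            have hw' : w ∈ p1.U z i := hR1 z hz1 i hi w hwz hw1
            have hsub' : p1.U z i ⊆ p1.U w 0 := by
              intro x hx
              have hx1 : x ∈ p1.A := p1.mem_powerset z hz1 i (hn ▸ hi) hx
              have hxU' : x ∈ U' z i := by
                rw [hU'1 z hz1 i hi]
                exact Finset.mem_union_left _ (Finset.mem_union_left _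
                  (Finset.mem_union_left _ hx))
              exact hR1 w hw1 0 hn0 x (hsub hxU') hx1
            exact p1.P3 z hz1 w hw1 i (hn ▸ hi) hw' hsub'
          · -- w ∈ A0 \ A1, z ∈ A1 \ A0 : w < z by separation
            have hw0 : w ∈ p0.A := hw.resolve_right hw1
            exact le_of_lt (hsep2 w (Finset.mem_sdiff.mpr ⟨hw0, hw1⟩) z
              (Finset.mem_sdiff.mpr ⟨hz1, hz0⟩))
      · -- w ∈ B: then U' w 0 = {w}, and z ∈ U' z i ⊆ {w} gives z = w
        obtain ⟨α, hα, k, hk, hρk⟩ := hρsurj w hwB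
        have : z ∈ U' w 0 := hsub (hself z (Finset.mem_union_left _ hz) i hi)
        rw [← hρk, hU'B α hα k hk 0 hn0, Finset.mem_singleton] at this
        rw [this, hρk]
    · -- z ∈ B: U' z i = {z}, so w = z
      obtain ⟨α, hα, k, hk, hρk⟩ := hρsurj z hzB
      rw [← hρk, hU'B α hα k hk i hi, Finset.mem_singleton] at hwz
      rw [hwz, hρk]
end
end

section
/- In the amalgamation setup, p'≤p0 and p'≤p1, i.e. p'=(A,n,U') extends both p0 and p1 in the ordering of P. -/
noncomputable section

/-- Auxiliary lemma: the amalgam extends the "left" condition.  Applied twice (with the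
roles of `p0` and `p1` swapped) it yields the full claim. -/
theorem extends_left_aux
    (p0 p1 : Cond) (σ : CtblOrd → CtblOrd)
    (htw : Twins p0 p1 σ)
    (B : Finset CtblOrd)
    (hB : ∀ b ∈ B, b ∉ p0.A ∪ p1.A)
    (ρ : CtblOrd → ℕ → CtblOrd)
    (hρB : ∀ α ∈ p0.A ∪ p1.A, ∀ i < p0.n, ρ α i ∈ B)
    (hρinj : ∀ α ∈ p0.A ∪ p1.A, ∀ α' ∈ p0.A ∪ p1.A, ∀ i < p0.n, ∀ i' < p0.n,
      ρ α i = ρ α' i' → α = α' ∧ i = i')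
    (ex : CtblOrd → CtblOrd)
    (hex0 : ∀ α ∈ p0.A, ex α = σ α)
    (V0 W0 : CtblOrd → ℕ → Finset CtblOrd)
    (hV0 : ∀ β j x, x ∈ V0 β j ↔
      ∃ α ∈ p0.A, ∃ i < p0.n, ρ α i = x ∧ p0.U α i ⊆ p0.U β j)
    (hW0 : ∀ β j x, x ∈ W0 β j ↔
      ∃ α ∈ p1.A, ∃ i < p0.n, ρ α i = x ∧
        ∃ γ ∈ p0.A ∩ p1.A, ∃ l < p0.n, p1.U α i ⊆ p1.U γ l ∧ p0.U γ l ⊆ p0.U β j)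
    (U' : CtblOrd → ℕ → Finset CtblOrd)
    (hU'0 : ∀ β ∈ p0.A, ∀ j < p0.n,
      U' β j = p0.U β j ∪ p1.U (ex β) j ∪ V0 β j ∪ W0 β j) :
    ExtendsTriple ((p0.A ∪ p1.A) ∪ B) p0.n U' p0 := by
  obtain ⟨hn, hcard, himg, hmono, hid, hI2⟩ := htw
  -- basic helpers about σ
  have hσA1 : ∀ α ∈ p0.A, σ α ∈ p1.A := by
    intro α hα; rw [← himg]; exact Finset.mem_image_of_mem σ hα
  have hσinj : ∀ α ∈ p0.A, ∀ β ∈ p0.A, σ α = σ β → α = β := by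
    intro α hα β hβ h
    rcases lt_trichotomy α β with h1 | h1 | h1
    · exact absurd h (ne_of_lt (hmono α hα β hβ h1))
    · exact h1
    · exact absurd h.symm (ne_of_lt (hmono β hβ α hα h1))
  have hfix : ∀ γ ∈ p0.A, γ ∈ p1.A → σ γ = γ := by
    intro γ h0 h1; exact hid γ (Finset.mem_inter.mpr ⟨h0, h1⟩)
  have hD : ∀ γ ∈ p0.A, σ γ ∈ p0.A → σ γ = γ := by
    intro γ hγ h
    exact hσinj (σ γ) h γ hγ (hfix (σ γ) h (hσA1 γ hγ))
  have hU0A : ∀ α ∈ p0.A, ∀ i < p0.n, p0.U α i ⊆ p0.A := p0.mem_powerset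
  have hU1A : ∀ β ∈ p1.A, ∀ i < p0.n, p1.U β i ⊆ p1.A := by
    intro β hβ i hi; exact p1.mem_powerset β hβ i (hn ▸ hi)
  have hVB : ∀ β j x, x ∈ V0 β j → x ∈ B := by
    intro β j x hx
    obtain ⟨α, hα, i, hi, hρx, -⟩ := (hV0 β j x).mp hx
    exact hρx ▸ hρB α (Finset.mem_union.mpr (Or.inl hα)) i hi
  have hWB : ∀ β j x, x ∈ W0 β j → x ∈ B := by
    intro β j x hx
    obtain ⟨α, hα, i, hi, hρx, -⟩ := (hW0 β j x).mp hx
    exact hρx ▸ hρB α (Finset.mem_union.mpr (Or.inr hα)) i hi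
  have hBnot0 : ∀ x ∈ B, x ∉ p0.A := by
    intro x hx h; exact hB x hx (Finset.mem_union.mpr (Or.inl h))
  have hBnot1 : ∀ x ∈ B, x ∉ p1.A := by
    intro x hx h; exact hB x hx (Finset.mem_union.mpr (Or.inr h))
  have hU1cap : ∀ α ∈ p0.A, ∀ i < p0.n, ∀ x, x ∈ p1.U (σ α) i → x ∈ p0.A →
      x ∈ p0.U α i := by
    intro α hα i hi x hx hxA
    rw [hI2 α hα i hi] at hx
    obtain ⟨γ, hγ, rfl⟩ := Finset.mem_image.mp hx
    rw [hD γ (hU0A α hα i hi hγ) hxA]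
    exact hγ
  have hU'σ : ∀ β ∈ p0.A, ∀ j < p0.n,
      U' β j = p0.U β j ∪ p1.U (σ β) j ∪ V0 β j ∪ W0 β j := by
    intro β hβ j hj; rw [hU'0 β hβ j hj, hex0 β hβ]
  refine ⟨?_, le_refl _, ?_, ?_, ?_⟩
  · intro x hx
    exact Finset.mem_union.mpr (Or.inl (Finset.mem_union.mpr (Or.inl hx)))
  · -- clause (c)
    intro β hβ j hj
    rw [hU'σ β hβ j hj]
    ext x
    simp only [Finset.mem_inter, Finset.mem_union]
    constructor
    · intro hx
      exact ⟨Or.inl (Or.inl (Or.inl hx)), hU0A β hβ j hj hx⟩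
    · rintro ⟨((h | h) | h) | h, hxA⟩
      · exact h
      · exact hU1cap β hβ j hj x h hxA
      · exact absurd hxA (hBnot0 x (hVB β j x h))
      · exact absurd hxA (hBnot0 x (hWB β j x h))
  · -- clause (d1)
    intro α hα i hi β hβ j hj hdis
    have hd : ∀ x, x ∈ p0.U α i → x ∈ p0.U β j → False := by
      intro x h1 h2
      exact Finset.eq_empty_iff_forall_notMem.mp hdis x (Finset.mem_inter.mpr ⟨h1, h2⟩)
    rw [Finset.eq_empty_iff_forall_notMem]
    intro x hx
    rw [Finset.mem_inter, hU'σ α hα i hi, hU'σ β hβ j hj] at hx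
    obtain ⟨h1, h2⟩ := hx
    simp only [Finset.mem_union] at h1 h2
    -- helper to rule out A-side vs B-side clashes
    have hA0B : x ∈ p0.A → x ∈ B → False := fun hA hBx => hBnot0 x hBx hA
    have hA1B : x ∈ p1.A → x ∈ B → False := fun hA hBx => hBnot1 x hBx hA
    rcases h1 with ((h1 | h1) | h1) | h1 <;> rcases h2 with ((h2 | h2) | h2) | h2
    · exact hd x h1 h2
    · exact hd x h1 (hU1cap β hβ j hj x h2 (hU0A α hα i hi h1))
    · exact hA0B (hU0A α hα i hi h1) (hVB β j x h2)
    · exact hA0B (hU0A α hα i hi h1) (hWB β j x h2)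
    · exact hd x (hU1cap α hα i hi x h1 (hU0A β hβ j hj h2)) h2
    · -- U1 vs U1
      rw [hI2 α hα i hi] at h1
      rw [hI2 β hβ j hj] at h2
      obtain ⟨γ, hγ, hγx⟩ := Finset.mem_image.mp h1
      obtain ⟨δ, hδ, hδx⟩ := Finset.mem_image.mp h2
      have hγδ : γ = δ :=
        hσinj γ (hU0A α hα i hi hγ) δ (hU0A β hβ j hj hδ) (hγx.trans hδx.symm)
      exact hd γ hγ (hγδ ▸ hδ)
    · exact hA1B (hU1A (σ α) (hσA1 α hα) i hi h1) (hVB β j x h2)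
    · exact hA1B (hU1A (σ α) (hσA1 α hα) i hi h1) (hWB β j x h2)
    · exact hA0B (hU0A β hβ j hj h2) (hVB α i x h1)
    · exact hA1B (hU1A (σ β) (hσA1 β hβ) j hj h2) (hVB α i x h1)
    · -- V0 vs V0
      obtain ⟨γ, hγ, l, hl, hρ1, hs1⟩ := (hV0 α i x).mp h1
      obtain ⟨γ', hγ', l', hl', hρ2, hs2⟩ := (hV0 β j x).mp h2
      obtain ⟨rfl, rfl⟩ := hρinj γ (Finset.mem_union.mpr (Or.inl hγ)) γ'
        (Finset.mem_union.mpr (Or.inl hγ')) l hl l' hl' (hρ1.trans hρ2.symm)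
      have hself : γ ∈ p0.U γ l := p0.P2_self γ hγ l hl
      exact hd γ (hs1 hself) (hs2 hself)
    · -- V0 vs W0
      obtain ⟨γ, hγ0, l, hl, hρ1, hs1⟩ := (hV0 α i x).mp h1
      obtain ⟨γ', hγ'1, l', hl', hρ2, δ, hδD, m, hm, ht1, ht2⟩ := (hW0 β j x).mp h2
      obtain ⟨rfl, rfl⟩ := hρinj γ (Finset.mem_union.mpr (Or.inl hγ0)) γ'
        (Finset.mem_union.mpr (Or.inr hγ'1)) l hl l' hl' (hρ1.trans hρ2.symm)
      have hδ0 : δ ∈ p0.A := (Finset.mem_inter.mp hδD).1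
      have hmem : γ ∈ p1.U δ m := ht1 (p1.P2_self γ hγ'1 l (hn ▸ hl))
      rw [← hid δ hδD] at hmem
      have hmem0 : γ ∈ p0.U δ m := hU1cap δ hδ0 m hm γ hmem hγ0
      exact hd γ (hs1 (p0.P2_self γ hγ0 l hl)) (ht2 hmem0)
    · exact hA0B (hU0A β hβ j hj h2) (hWB α i x h1)
    · exact hA1B (hU1A (σ β) (hσA1 β hβ) j hj h2) (hWB α i x h1)
    · -- W0 vs V0 (mirror of V0 vs W0)
      obtain ⟨γ', hγ'1, l', hl', hρ2, δ, hδD, m, hm, ht1, ht2⟩ := (hW0 α i x).mp h1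
      obtain ⟨γ, hγ0, l, hl2, hρ1, hs1⟩ := (hV0 β j x).mp h2
      obtain ⟨rfl, rfl⟩ := hρinj γ (Finset.mem_union.mpr (Or.inl hγ0)) γ'
        (Finset.mem_union.mpr (Or.inr hγ'1)) l hl2 l' hl' (hρ1.trans hρ2.symm)
      have hδ0 : δ ∈ p0.A := (Finset.mem_inter.mp hδD).1
      have hmem : γ ∈ p1.U δ m := ht1 (p1.P2_self γ hγ'1 l (hn ▸ hl2))
      rw [← hid δ hδD] at hmem
      have hmem0 : γ ∈ p0.U δ m := hU1cap δ hδ0 m hm γ hmem hγ0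
      exact hd γ (ht2 hmem0) (hs1 (p0.P2_self γ hγ0 l hl2))
    · -- W0 vs W0
      obtain ⟨γ, hγ1, l, hl, hρ1, δ, hδD, m, hm, ht1, ht2⟩ := (hW0 α i x).mp h1
      obtain ⟨γ', hγ'1, l', hl', hρ2, δ', hδD', m', hm', ht1', ht2'⟩ := (hW0 β j x).mp h2
      obtain ⟨rfl, rfl⟩ := hρinj γ (Finset.mem_union.mpr (Or.inr hγ1)) γ'
        (Finset.mem_union.mpr (Or.inr hγ'1)) l hl l' hl' (hρ1.trans hρ2.symm)
      have hδ0 : δ ∈ p0.A := (Finset.mem_inter.mp hδD).1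
      have hδ0' : δ' ∈ p0.A := (Finset.mem_inter.mp hδD').1
      have hself : γ ∈ p1.U γ l := p1.P2_self γ hγ1 l (hn ▸ hl)
      have hmem : γ ∈ p1.U δ m := ht1 hself
      have hmem' : γ ∈ p1.U δ' m' := ht1' hself
      rw [← hid δ hδD, hI2 δ hδ0 m hm] at hmem
      rw [← hid δ' hδD', hI2 δ' hδ0' m' hm'] at hmem'
      obtain ⟨c, hc, hcx⟩ := Finset.mem_image.mp hmem
      obtain ⟨c', hc', hcx'⟩ := Finset.mem_image.mp hmem'
      have hcc : c = c' :=
        hσinj c (hU0A δ hδ0 m hm hc) c' (hU0A δ' hδ0' m' hm' hc') (hcx.trans hcx'.symm)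
      exact hd c (ht2 hc) (ht2' (hcc ▸ hc'))
  · -- clause (d2)
    intro α hα i hi β hβ j hj hsub
    rw [hU'σ α hα i hi, hU'σ β hβ j hj]
    intro x hx
    simp only [Finset.mem_union] at hx ⊢
    rcases hx with ((h | h) | h) | h
    · exact Or.inl (Or.inl (Or.inl (hsub h)))
    · refine Or.inl (Or.inl (Or.inr ?_))
      rw [hI2 α hα i hi] at h
      rw [hI2 β hβ j hj]
      obtain ⟨γ, hγ, rfl⟩ := Finset.mem_image.mp h
      exact Finset.mem_image_of_mem σ (hsub hγ)
    · refine Or.inl (Or.inr ?_)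
      obtain ⟨γ, hγ, l, hl, hρx, hs⟩ := (hV0 α i x).mp h
      exact (hV0 β j x).mpr ⟨γ, hγ, l, hl, hρx, hs.trans hsub⟩
    · refine Or.inr ?_
      obtain ⟨γ, hγ, l, hl, hρx, δ, hδ, m, hm, ht1, ht2⟩ := (hW0 α i x).mp h
      exact (hW0 β j x).mpr ⟨γ, hγ, l, hl, hρx, δ, hδ, m, hm, ht1, ht2.trans hsub⟩

/-- `p' ≤ p0` and `p' ≤ p1`: the triple `p' = ⟨A, n, U'⟩` extends both `p0` and `p1` in the ordering of `P`. -/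
theorem claim_pprime_le
    (p0 p1 : Cond) (σ : CtblOrd → CtblOrd)
    (htw : Twins p0 p1 σ)
    (hsep1 : ∀ x ∈ p0.A ∩ p1.A, ∀ y ∈ p0.A \ p1.A, x < y)
    (hsep2 : ∀ y ∈ p0.A \ p1.A, ∀ z ∈ p1.A \ p0.A, y < z)
    (B : Finset CtblOrd)
    (hB : ∀ b ∈ B, b ∉ p0.A ∪ p1.A)
    (hBcard : B.card = (p0.A ∪ p1.A).card * p0.n)
    (ρ : CtblOrd → ℕ → CtblOrd)
    (hρB : ∀ α ∈ p0.A ∪ p1.A, ∀ i < p0.n, ρ α i ∈ B)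
    (hρinj : ∀ α ∈ p0.A ∪ p1.A, ∀ α' ∈ p0.A ∪ p1.A, ∀ i < p0.n, ∀ i' < p0.n,
      ρ α i = ρ α' i' → α = α' ∧ i = i')
    (hρsurj : ∀ b ∈ B, ∃ α ∈ p0.A ∪ p1.A, ∃ i < p0.n, ρ α i = b)
    (ex : CtblOrd → CtblOrd)
    (hex0 : ∀ α ∈ p0.A, ex α = σ α)
    (hex1 : ∀ α ∈ p0.A, ex (σ α) = α)
    (sm : CtblOrd → CtblOrd)
    (hsm0 : ∀ α ∈ p0.A, sm α = α)
    (hsm1 : ∀ α ∈ p0.A, sm (σ α) = α)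
    (V0 V1 W0 W1 : CtblOrd → ℕ → Finset CtblOrd)
    (hV0 : ∀ β j x, x ∈ V0 β j ↔
      ∃ α ∈ p0.A, ∃ i < p0.n, ρ α i = x ∧ p0.U α i ⊆ p0.U β j)
    (hV1 : ∀ β j x, x ∈ V1 β j ↔
      ∃ α ∈ p1.A, ∃ i < p0.n, ρ α i = x ∧ p1.U α i ⊆ p1.U β j)
    (hW0 : ∀ β j x, x ∈ W0 β j ↔
      ∃ α ∈ p1.A, ∃ i < p0.n, ρ α i = x ∧
        ∃ γ ∈ p0.A ∩ p1.A, ∃ l < p0.n, p1.U α i ⊆ p1.U γ l ∧ p0.U γ l ⊆ p0.U β j)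
    (hW1 : ∀ β j x, x ∈ W1 β j ↔
      ∃ α ∈ p0.A, ∃ i < p0.n, ρ α i = x ∧
        ∃ γ ∈ p0.A ∩ p1.A, ∃ l < p0.n, p0.U α i ⊆ p0.U γ l ∧ p1.U γ l ⊆ p1.U β j)
    (U' : CtblOrd → ℕ → Finset CtblOrd)
    (hU'0 : ∀ β ∈ p0.A, ∀ j < p0.n,
      U' β j = p0.U β j ∪ p1.U (ex β) j ∪ V0 β j ∪ W0 β j)
    (hU'1 : ∀ β ∈ p1.A, ∀ j < p0.n,
      U' β j = p1.U β j ∪ p0.U (ex β) j ∪ V1 β j ∪ W1 β j)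
    (hU'B : ∀ α ∈ p0.A ∪ p1.A, ∀ i < p0.n, ∀ j < p0.n, U' (ρ α i) j = {ρ α i})
    :
    ExtendsTriple ((p0.A ∪ p1.A) ∪ B) p0.n U' p0 ∧
    ExtendsTriple ((p0.A ∪ p1.A) ∪ B) p0.n U' p1 := by
  obtain ⟨hn, hcard, himg, hmono, hid, hI2⟩ := htw
  have htw0 : Twins p0 p1 σ := ⟨hn, hcard, himg, hmono, hid, hI2⟩
  -- basic helpers about σ
  have hσA1 : ∀ α ∈ p0.A, σ α ∈ p1.A := by
    intro α hα; rw [← himg]; exact Finset.mem_image_of_mem σ hα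
  have hσinj : ∀ α ∈ p0.A, ∀ β ∈ p0.A, σ α = σ β → α = β := by
    intro α hα β hβ h
    rcases lt_trichotomy α β with h1 | h1 | h1
    · exact absurd h (ne_of_lt (hmono α hα β hβ h1))
    · exact h1
    · exact absurd h.symm (ne_of_lt (hmono β hβ α hα h1))
  have hσsurj : ∀ β ∈ p1.A, ∃ α ∈ p0.A, σ α = β := by
    intro β hβ
    rw [← himg] at hβ
    obtain ⟨α, hα, hαβ⟩ := Finset.mem_image.mp hβ
    exact ⟨α, hα, hαβ⟩
  have hU0A : ∀ α ∈ p0.A, ∀ i < p0.n, p0.U α i ⊆ p0.A := p0.mem_powerset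
  have hucomm : p1.A ∪ p0.A = p0.A ∪ p1.A := Finset.union_comm _ _
  -- Twins p1 p0 ex
  have htw1 : Twins p1 p0 ex := by
    refine ⟨hn.symm, hcard.symm, ?_, ?_, ?_, ?_⟩
    · ext x
      simp only [Finset.mem_image]
      constructor
      · rintro ⟨b, hb, rfl⟩
        obtain ⟨α, hα, rfl⟩ := hσsurj b hb
        rw [hex1 α hα]; exact hα
      · intro hx
        exact ⟨σ x, hσA1 x hx, hex1 x hx⟩
    · intro a ha b hb hab
      obtain ⟨a0, ha0, rfl⟩ := hσsurj a ha
      obtain ⟨b0, hb0, rfl⟩ := hσsurj b hb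
      rw [hex1 a0 ha0, hex1 b0 hb0]
      rcases lt_trichotomy a0 b0 with h1 | h1 | h1
      · exact h1
      · subst h1; exact absurd hab (lt_irrefl _)
      · exact absurd (hmono b0 hb0 a0 ha0 h1) (lt_asymm hab)
    · intro δ hδ
      have hδ' : δ ∈ p0.A ∩ p1.A := Finset.inter_comm p1.A p0.A ▸ hδ
      have h1 := hex1 δ (Finset.mem_inter.mp hδ').1
      rwa [hid δ hδ'] at h1
    · intro β hβ i hi
      obtain ⟨α, hα, rfl⟩ := hσsurj β hβ
      rw [hex1 α hα, hI2 α hα i (hn ▸ hi), Finset.image_image]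
      ext x
      simp only [Finset.mem_image]
      constructor
      · intro hx
        exact ⟨x, hx, by rw [Function.comp_apply, hex1 x (hU0A α hα i (hn ▸ hi) hx)]⟩
      · rintro ⟨c, hc, hcx⟩
        rw [← hcx, Function.comp_apply, hex1 c (hU0A α hα i (hn ▸ hi) hc)]
        exact hc
  -- first half
  have h0 := extends_left_aux p0 p1 σ htw0 B hB ρ hρB hρinj ex hex0 V0 W0 hV0 hW0 U' hU'0
  -- data for the second half, with roles swapped
  have hB' : ∀ b ∈ B, b ∉ p1.A ∪ p0.A := by rw [hucomm]; exact hB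
  have hρB' : ∀ α ∈ p1.A ∪ p0.A, ∀ i < p1.n, ρ α i ∈ B := by
    rw [hucomm, ← hn]; exact hρB
  have hρinj' : ∀ α ∈ p1.A ∪ p0.A, ∀ α' ∈ p1.A ∪ p0.A, ∀ i < p1.n, ∀ i' < p1.n,
      ρ α i = ρ α' i' → α = α' ∧ i = i' := by
    rw [hucomm, ← hn]; exact hρinj
  have hV1' : ∀ β j x, x ∈ V1 β j ↔
      ∃ α ∈ p1.A, ∃ i < p1.n, ρ α i = x ∧ p1.U α i ⊆ p1.U β j := by
    rw [← hn]; exact hV1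
  have hW1' : ∀ β j x, x ∈ W1 β j ↔
      ∃ α ∈ p0.A, ∃ i < p1.n, ρ α i = x ∧
        ∃ γ ∈ p1.A ∩ p0.A, ∃ l < p1.n,
          p0.U α i ⊆ p0.U γ l ∧ p1.U γ l ⊆ p1.U β j := by
    rw [← hn, Finset.inter_comm p1.A p0.A]; exact hW1
  have hU'1' : ∀ β ∈ p1.A, ∀ j < p1.n,
      U' β j = p1.U β j ∪ p0.U (ex β) j ∪ V1 β j ∪ W1 β j := by
    rw [← hn]; exact hU'1
  have h1 := extends_left_aux p1 p0 ex htw1 B hB' ρ hρB' hρinj' ex (fun _ _ => rfl)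
    V1 W1 hV1' hW1' U' hU'1'
  refine ⟨h0, ?_⟩
  rw [show p0.A ∪ p1.A = p1.A ∪ p0.A from hucomm.symm, hn]
  exact h1
end
end

section
/- In the full amalgamation setup, for every z∈A0 and j<n with U0(ξ0,k)⊆U0(z,j) one has U(z,j)=U'(z,j)∪V1(ξ1,k); in particular U(z,j)∖U'(z,j)⊆V1(ξ1,k). -/
noncomputable section

/-- For `z ∈ A0` and `j < n` with `U0(ξ0,k) ⊆ U0(z,j)` one has `U(z,j) = U'(z,j) ∪ V1(ξ1,k)`; in particular `U(z,j) ∖ U'(z,j) ⊆ V1(ξ1,k)`. -/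
theorem U_minus_Uprime
    (p0 p1 : Cond) (σ : CtblOrd → CtblOrd)
    (htw : Twins p0 p1 σ)
    (hsep1 : ∀ x ∈ p0.A ∩ p1.A, ∀ y ∈ p0.A \ p1.A, x < y)
    (hsep2 : ∀ y ∈ p0.A \ p1.A, ∀ z ∈ p1.A \ p0.A, y < z)
    (B : Finset CtblOrd)
    (hB : ∀ b ∈ B, b ∉ p0.A ∪ p1.A)
    (hBcard : B.card = (p0.A ∪ p1.A).card * p0.n)
    (ρ : CtblOrd → ℕ → CtblOrd)
    (hρB : ∀ α ∈ p0.A ∪ p1.A, ∀ i < p0.n, ρ α i ∈ B)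
    (hρinj : ∀ α ∈ p0.A ∪ p1.A, ∀ α' ∈ p0.A ∪ p1.A, ∀ i < p0.n, ∀ i' < p0.n,
      ρ α i = ρ α' i' → α = α' ∧ i = i')
    (hρsurj : ∀ b ∈ B, ∃ α ∈ p0.A ∪ p1.A, ∃ i < p0.n, ρ α i = b)
    (ex : CtblOrd → CtblOrd)
    (hex0 : ∀ α ∈ p0.A, ex α = σ α)
    (hex1 : ∀ α ∈ p0.A, ex (σ α) = α)
    (sm : CtblOrd → CtblOrd)
    (hsm0 : ∀ α ∈ p0.A, sm α = α)
    (hsm1 : ∀ α ∈ p0.A, sm (σ α) = α)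
    (V0 V1 W0 W1 : CtblOrd → ℕ → Finset CtblOrd)
    (hV0 : ∀ β j x, x ∈ V0 β j ↔
      ∃ α ∈ p0.A, ∃ i < p0.n, ρ α i = x ∧ p0.U α i ⊆ p0.U β j)
    (hV1 : ∀ β j x, x ∈ V1 β j ↔
      ∃ α ∈ p1.A, ∃ i < p0.n, ρ α i = x ∧ p1.U α i ⊆ p1.U β j)
    (hW0 : ∀ β j x, x ∈ W0 β j ↔
      ∃ α ∈ p1.A, ∃ i < p0.n, ρ α i = x ∧
        ∃ γ ∈ p0.A ∩ p1.A, ∃ l < p0.n, p1.U α i ⊆ p1.U γ l ∧ p0.U γ l ⊆ p0.U β j)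
    (hW1 : ∀ β j x, x ∈ W1 β j ↔
      ∃ α ∈ p0.A, ∃ i < p0.n, ρ α i = x ∧
        ∃ γ ∈ p0.A ∩ p1.A, ∃ l < p0.n, p0.U α i ⊆ p0.U γ l ∧ p1.U γ l ⊆ p1.U β j)
    (U' : CtblOrd → ℕ → Finset CtblOrd)
    (hU'0 : ∀ β ∈ p0.A, ∀ j < p0.n,
      U' β j = p0.U β j ∪ p1.U (ex β) j ∪ V0 β j ∪ W0 β j)
    (hU'1 : ∀ β ∈ p1.A, ∀ j < p0.n,
      U' β j = p1.U β j ∪ p0.U (ex β) j ∪ V1 β j ∪ W1 β j)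
    (hU'B : ∀ α ∈ p0.A ∪ p1.A, ∀ i < p0.n, ∀ j < p0.n, U' (ρ α i) j = {ρ α i})
    (ξ0 ξ1 : CtblOrd) (hξ0 : ξ0 ∈ p0.A \ p1.A) (hξ1 : ξ1 = σ ξ0)
    (k m : ℕ) (hkm : k < m) (hmn : m < p0.n)
    (U : CtblOrd → ℕ → Finset CtblOrd)
    (hUyes : ∀ z ∈ (p0.A ∪ p1.A) ∪ B, ∀ j < p0.n,
      z ∈ p0.A → p0.U ξ0 k ⊆ p0.U z j → U z j = U' z j ∪ U' ξ1 k)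
    (hUno : ∀ z ∈ (p0.A ∪ p1.A) ∪ B, ∀ j < p0.n,
      ¬(z ∈ p0.A ∧ p0.U ξ0 k ⊆ p0.U z j) → U z j = U' z j)
    :
    ∀ z ∈ p0.A, ∀ j < p0.n, p0.U ξ0 k ⊆ p0.U z j →
      U z j = U' z j ∪ V1 ξ1 k ∧ U z j \ U' z j ⊆ V1 ξ1 k := by
  intro z hz j hj hsub
  obtain ⟨hn, hcard, himg, hmono, hid, hσU⟩ := htw
  have hk : k < p0.n := lt_trans hkm hmn
  have hξ0A : ξ0 ∈ p0.A := (Finset.mem_sdiff.mp hξ0).1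
  have hξ1A : ξ1 ∈ p1.A := by
    rw [hξ1, ← himg]; exact Finset.mem_image_of_mem σ hξ0A
  have hσinj : ∀ α ∈ p0.A, ∀ β ∈ p0.A, σ α = σ β → α = β := by
    intro α hα β hβ h
    rcases lt_trichotomy α β with h'|h'|h'
    · exact absurd h (ne_of_lt (hmono α hα β hβ h'))
    · exact h'
    · exact absurd h.symm (ne_of_lt (hmono β hβ α hα h'))
  -- p1.U ξ1 k = σ '' p0.U ξ0 k
  have hU1ξ : p1.U ξ1 k = (p0.U ξ0 k).image σ := by
    rw [hξ1]; exact hσU ξ0 hξ0A k hk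
  have hzmem : z ∈ (p0.A ∪ p1.A) ∪ B :=
    Finset.mem_union_left _ (Finset.mem_union_left _ hz)
  have hmain := hUyes z hzmem j hj hz hsub
  have hexξ1 : ex ξ1 = ξ0 := by rw [hξ1]; exact hex1 ξ0 hξ0A
  have hU'ξ1 : U' ξ1 k = p1.U ξ1 k ∪ p0.U ξ0 k ∪ V1 ξ1 k ∪ W1 ξ1 k := by
    rw [hU'1 ξ1 hξ1A k hk, hexξ1]
  have hU'z : U' z j = p0.U z j ∪ p1.U (σ z) j ∪ V0 z j ∪ W0 z j := by
    rw [hU'0 z hz j hj, hex0 z hz]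
  -- key: U' ξ1 k ⊆ U' z j ∪ V1 ξ1 k
  have hkey : U' ξ1 k ⊆ U' z j ∪ V1 ξ1 k := by
    rw [hU'ξ1]
    intro x hx
    rcases Finset.mem_union.mp hx with hx | hx
    · rcases Finset.mem_union.mp hx with hx | hx
      · rcases Finset.mem_union.mp hx with hx | hx
        · -- x ∈ p1.U ξ1 k ⊆ p1.U (σ z) j
          apply Finset.mem_union_left
          rw [hU'z]
          apply Finset.mem_union_left; apply Finset.mem_union_left
          apply Finset.mem_union_right
          rw [hσU z hz j hj]
          rw [hU1ξ] at hx
          obtain ⟨y, hy, rfl⟩ := Finset.mem_image.mp hx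
          exact Finset.mem_image_of_mem σ (hsub hy)
        · -- x ∈ p0.U ξ0 k ⊆ p0.U z j
          apply Finset.mem_union_left
          rw [hU'z]
          apply Finset.mem_union_left; apply Finset.mem_union_left
          exact Finset.mem_union_left _ (hsub hx)
      · exact Finset.mem_union_right _ hx
    · -- x ∈ W1 ξ1 k ⊆ V0 z j
      apply Finset.mem_union_left
      rw [hU'z]
      apply Finset.mem_union_left
      apply Finset.mem_union_right
      obtain ⟨α, hα, i, hi, hρx, γ, hγ, l, hl, h1, h2⟩ := (hW1 ξ1 k x).mp hx
      have hγ0 : γ ∈ p0.A := (Finset.mem_inter.mp hγ).1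
      have hγ1 : γ ∈ p1.A := (Finset.mem_inter.mp hγ).2
      -- p0.U γ l ⊆ p0.U ξ0 k
      have hσγ : σ γ = γ := hid γ hγ
      have hU1γ : p1.U γ l = (p0.U γ l).image σ := by
        have := hσU γ hγ0 l hl; rwa [hσγ] at this
      have h3 : p0.U γ l ⊆ p0.U ξ0 k := by
        intro y hy
        have hyA : y ∈ p0.A := p0.mem_powerset γ hγ0 l hl hy
        have : σ y ∈ p1.U ξ1 k := h2 (by rw [hU1γ]; exact Finset.mem_image_of_mem σ hy)
        rw [hU1ξ] at this
        obtain ⟨y', hy', hyy⟩ := Finset.mem_image.mp this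
        have hy'A : y' ∈ p0.A := p0.mem_powerset ξ0 hξ0A k hk hy'
        rwa [← hσinj y' hy'A y hyA hyy]
      exact (hV0 z j x).mpr ⟨α, hα, i, hi, hρx, fun y hy => hsub (h3 (h1 hy))⟩
  have heq : U z j = U' z j ∪ V1 ξ1 k := by
    rw [hmain]
    apply Finset.Subset.antisymm
    · intro x hx
      rcases Finset.mem_union.mp hx with hx | hx
      · exact Finset.mem_union_left _ hx
      · exact hkey hx
    · intro x hx
      rcases Finset.mem_union.mp hx with hx | hx
      · exact Finset.mem_union_left _ hx
      · apply Finset.mem_union_right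
        rw [hU'ξ1]
        exact Finset.mem_union_left _ (Finset.mem_union_right _ hx)
  refine ⟨heq, ?_⟩
  intro x hx
  rw [Finset.mem_sdiff, heq] at hx
  rcases Finset.mem_union.mp hx.1 with h | h
  · exact absurd h hx.2
  · exact h
end
end

section
/- In the full amalgamation setup, if (α,i)∈A*×n, β∈A*, j<n and ρ(α,i)∈U(β,j), then σ̲(α)∈U0(σ̲(β),j), where σ̲ is the smashing function. -/
noncomputable section

/-- If `(α,i) ∈ A* × n`, `β ∈ A*`, `j < n` and `ρ(α,i) ∈ U(β,j)`, then `σ̲(α) ∈ U0(σ̲(β),j)`. -/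
theorem claim_push3
    (p0 p1 : Cond) (σ : CtblOrd → CtblOrd)
    (htw : Twins p0 p1 σ)
    (hsep1 : ∀ x ∈ p0.A ∩ p1.A, ∀ y ∈ p0.A \ p1.A, x < y)
    (hsep2 : ∀ y ∈ p0.A \ p1.A, ∀ z ∈ p1.A \ p0.A, y < z)
    (B : Finset CtblOrd)
    (hB : ∀ b ∈ B, b ∉ p0.A ∪ p1.A)
    (hBcard : B.card = (p0.A ∪ p1.A).card * p0.n)
    (ρ : CtblOrd → ℕ → CtblOrd)
    (hρB : ∀ α ∈ p0.A ∪ p1.A, ∀ i < p0.n, ρ α i ∈ B)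
    (hρinj : ∀ α ∈ p0.A ∪ p1.A, ∀ α' ∈ p0.A ∪ p1.A, ∀ i < p0.n, ∀ i' < p0.n,
      ρ α i = ρ α' i' → α = α' ∧ i = i')
    (hρsurj : ∀ b ∈ B, ∃ α ∈ p0.A ∪ p1.A, ∃ i < p0.n, ρ α i = b)
    (ex : CtblOrd → CtblOrd)
    (hex0 : ∀ α ∈ p0.A, ex α = σ α)
    (hex1 : ∀ α ∈ p0.A, ex (σ α) = α)
    (sm : CtblOrd → CtblOrd)
    (hsm0 : ∀ α ∈ p0.A, sm α = α)
    (hsm1 : ∀ α ∈ p0.A, sm (σ α) = α)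
    (V0 V1 W0 W1 : CtblOrd → ℕ → Finset CtblOrd)
    (hV0 : ∀ β j x, x ∈ V0 β j ↔
      ∃ α ∈ p0.A, ∃ i < p0.n, ρ α i = x ∧ p0.U α i ⊆ p0.U β j)
    (hV1 : ∀ β j x, x ∈ V1 β j ↔
      ∃ α ∈ p1.A, ∃ i < p0.n, ρ α i = x ∧ p1.U α i ⊆ p1.U β j)
    (hW0 : ∀ β j x, x ∈ W0 β j ↔
      ∃ α ∈ p1.A, ∃ i < p0.n, ρ α i = x ∧
        ∃ γ ∈ p0.A ∩ p1.A, ∃ l < p0.n, p1.U α i ⊆ p1.U γ l ∧ p0.U γ l ⊆ p0.U β j)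
    (hW1 : ∀ β j x, x ∈ W1 β j ↔
      ∃ α ∈ p0.A, ∃ i < p0.n, ρ α i = x ∧
        ∃ γ ∈ p0.A ∩ p1.A, ∃ l < p0.n, p0.U α i ⊆ p0.U γ l ∧ p1.U γ l ⊆ p1.U β j)
    (U' : CtblOrd → ℕ → Finset CtblOrd)
    (hU'0 : ∀ β ∈ p0.A, ∀ j < p0.n,
      U' β j = p0.U β j ∪ p1.U (ex β) j ∪ V0 β j ∪ W0 β j)
    (hU'1 : ∀ β ∈ p1.A, ∀ j < p0.n,
      U' β j = p1.U β j ∪ p0.U (ex β) j ∪ V1 β j ∪ W1 β j)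
    (hU'B : ∀ α ∈ p0.A ∪ p1.A, ∀ i < p0.n, ∀ j < p0.n, U' (ρ α i) j = {ρ α i})
    (ξ0 ξ1 : CtblOrd) (hξ0 : ξ0 ∈ p0.A \ p1.A) (hξ1 : ξ1 = σ ξ0)
    (k m : ℕ) (hkm : k < m) (hmn : m < p0.n)
    (U : CtblOrd → ℕ → Finset CtblOrd)
    (hUyes : ∀ z ∈ (p0.A ∪ p1.A) ∪ B, ∀ j < p0.n,
      z ∈ p0.A → p0.U ξ0 k ⊆ p0.U z j → U z j = U' z j ∪ U' ξ1 k)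
    (hUno : ∀ z ∈ (p0.A ∪ p1.A) ∪ B, ∀ j < p0.n,
      ¬(z ∈ p0.A ∧ p0.U ξ0 k ⊆ p0.U z j) → U z j = U' z j)
    :
    ∀ α ∈ p0.A ∪ p1.A, ∀ i < p0.n, ∀ β ∈ p0.A ∪ p1.A, ∀ j < p0.n,
      ρ α i ∈ U β j → sm α ∈ p0.U (sm β) j := by
  obtain ⟨hn, hcard, himg, hmono, hid, hI2⟩ := htw
  have hinjA0 : ∀ a ∈ p0.A, ∀ b ∈ p0.A, σ a = σ b → a = b := by
    intro a ha b hb hab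
    rcases lt_trichotomy a b with h | h | h
    · exact absurd hab (ne_of_lt (hmono a ha b hb h))
    · exact h
    · exact absurd hab.symm (ne_of_lt (hmono b hb a ha h))
  have hsurjσ : ∀ a ∈ p1.A, ∃ a' ∈ p0.A, σ a' = a := by
    intro a ha; rw [← himg] at ha; exact Finset.mem_image.mp ha
  have hσmem : ∀ a ∈ p0.A, σ a ∈ p1.A := by
    intro a ha; rw [← himg]; exact Finset.mem_image_of_mem σ ha
  have hcancel : ∀ a ∈ p0.A, ∀ b ∈ p0.A, ∀ i, i < p0.n → ∀ j, j < p0.n →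
      p1.U (σ a) i ⊆ p1.U (σ b) j → p0.U a i ⊆ p0.U b j := by
    intro a ha b hb i hi j hj hsub x hx
    have h1 : σ x ∈ p1.U (σ a) i := by
      rw [hI2 a ha i hi]; exact Finset.mem_image_of_mem σ hx
    have h2 := hsub h1
    rw [hI2 b hb j hj] at h2
    obtain ⟨y, hy, hxy⟩ := Finset.mem_image.mp h2
    have hxA : x ∈ p0.A := p0.mem_powerset a ha i hi hx
    have hyA : y ∈ p0.A := p0.mem_powerset b hb j hj hy
    rwa [← hinjA0 y hyA x hxA hxy]
  intro α hα i hi β hβ j hj hmem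
  have hRB : ρ α i ∉ p0.A ∪ p1.A := hB _ (hρB α hα i hi)
  have hRB0 : ρ α i ∉ p0.A := fun h => hRB (Finset.mem_union_left _ h)
  have hRB1 : ρ α i ∉ p1.A := fun h => hRB (Finset.mem_union_right _ h)
  -- key lemma for β ∈ A0
  have key0 : ∀ b ∈ p0.A, ∀ jj, jj < p0.n → ρ α i ∈ U' b jj → sm α ∈ p0.U b jj := by
    intro b hb jj hjj hm
    rw [hU'0 b hb jj hjj] at hm
    rcases Finset.mem_union.mp hm with hm | hm
    · rcases Finset.mem_union.mp hm with hm | hm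
      · rcases Finset.mem_union.mp hm with hm | hm
        · exact absurd (p0.mem_powerset b hb jj hjj hm) hRB0
        · rw [hex0 b hb] at hm
          exact absurd (p1.mem_powerset (σ b) (hσmem b hb) jj (hn ▸ hjj) hm) hRB1
      · -- V0
        obtain ⟨a1, ha1, i1, hi1, heq, hsub⟩ := (hV0 b jj _).mp hm
        obtain ⟨rfl, rfl⟩ := hρinj a1 (Finset.mem_union_left _ ha1) α hα i1 hi1 i hi heq
        rw [hsm0 a1 ha1]
        exact hsub (p0.P2_self a1 ha1 i1 hi1)
    · -- W0
      obtain ⟨a1, ha1, i1, hi1, heq, γ, hγ, l, hl, hs1, hs2⟩ := (hW0 b jj _).mp hm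
      obtain ⟨rfl, rfl⟩ := hρinj a1 (Finset.mem_union_right _ ha1) α hα i1 hi1 i hi heq
      obtain ⟨α', hα', rfl⟩ := hsurjσ a1 ha1
      have hγ0 : γ ∈ p0.A := (Finset.mem_inter.mp hγ).1
      have hσγ : σ γ = γ := hid γ hγ
      rw [← hσγ] at hs1
      have hsub0 : p0.U α' i1 ⊆ p0.U γ l := hcancel α' hα' γ hγ0 i1 hi1 l hl hs1
      rw [hsm1 α' hα']
      exact hs2 (hsub0 (p0.P2_self α' hα' i1 hi1))
  -- key lemma for β ∈ A1 seen through σ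
  have key1 : ∀ b ∈ p1.A, ∀ b' ∈ p0.A, σ b' = b → ∀ jj, jj < p0.n →
      ρ α i ∈ U' b jj → sm α ∈ p0.U b' jj := by
    intro b hb b' hb' hbb jj hjj hm
    rw [hU'1 b hb jj hjj] at hm
    rcases Finset.mem_union.mp hm with hm | hm
    · rcases Finset.mem_union.mp hm with hm | hm
      · rcases Finset.mem_union.mp hm with hm | hm
        · exact absurd (p1.mem_powerset b hb jj (hn ▸ hjj) hm) hRB1
        · rw [← hbb, hex1 b' hb'] at hm
          exact absurd (p0.mem_powerset b' hb' jj hjj hm) hRB0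
      · -- V1
        obtain ⟨a1, ha1, i1, hi1, heq, hsub⟩ := (hV1 b jj _).mp hm
        obtain ⟨rfl, rfl⟩ := hρinj a1 (Finset.mem_union_right _ ha1) α hα i1 hi1 i hi heq
        obtain ⟨α', hα', rfl⟩ := hsurjσ a1 ha1
        rw [← hbb] at hsub
        have hsub0 : p0.U α' i1 ⊆ p0.U b' jj := hcancel α' hα' b' hb' i1 hi1 jj hjj hsub
        rw [hsm1 α' hα']
        exact hsub0 (p0.P2_self α' hα' i1 hi1)
    · -- W1
      obtain ⟨a1, ha1, i1, hi1, heq, γ, hγ, l, hl, hs1, hs2⟩ := (hW1 b jj _).mp hm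
      obtain ⟨rfl, rfl⟩ := hρinj a1 (Finset.mem_union_left _ ha1) α hα i1 hi1 i hi heq
      have hγ0 : γ ∈ p0.A := (Finset.mem_inter.mp hγ).1
      have hσγ : σ γ = γ := hid γ hγ
      rw [← hσγ, ← hbb] at hs2
      have hsub0 : p0.U γ l ⊆ p0.U b' jj := hcancel γ hγ0 b' hb' l hl jj hjj hs2
      rw [hsm0 a1 ha1]
      exact hsub0 (hs1 (p0.P2_self a1 ha1 i1 hi1))
  have hβmem : β ∈ (p0.A ∪ p1.A) ∪ B := Finset.mem_union_left _ hβ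
  by_cases hβ0 : β ∈ p0.A
  · rw [hsm0 β hβ0]
    by_cases hc : p0.U ξ0 k ⊆ p0.U β j
    · rw [hUyes β hβmem j hj hβ0 hc] at hmem
      rcases Finset.mem_union.mp hmem with hm | hm
      · exact key0 β hβ0 j hj hm
      · have hξ0A : ξ0 ∈ p0.A := (Finset.mem_sdiff.mp hξ0).1
        have hξ1A : ξ1 ∈ p1.A := hξ1 ▸ hσmem ξ0 hξ0A
        have hk : k < p0.n := hkm.trans hmn
        exact hc (key1 ξ1 hξ1A ξ0 hξ0A hξ1.symm k hk hm)
    · rw [hUno β hβmem j hj (fun h => hc h.2)] at hmem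
      exact key0 β hβ0 j hj hmem
  · have hβ1 : β ∈ p1.A := (Finset.mem_union.mp hβ).resolve_left hβ0
    rw [hUno β hβmem j hj (fun h => hβ0 h.1)] at hmem
    obtain ⟨β', hβ', hσβ⟩ := hsurjσ β hβ1
    rw [← hσβ, hsm1 β' hβ']
    exact key1 β hβ1 β' hβ' hσβ j hj hmem
end
end

section
/- In the full amalgamation setup, the triple p=(A,n,U) is a condition, i.e. p∈P: it satisfies (P2) (each z∈A lies in U(z,i) for all i<n, and U(z,i)⊆U(z,i−1) for 1≤i<n) and (P3) (for z,w∈A and i<n, if w∈U(z,i) and U(z,i)⊆U(w,0) then w≤z). -/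
noncomputable section

/-- The triple `p = ⟨A, n, U⟩` is a condition, i.e. `p ∈ P`: `U` maps `A × n` into `𝒫(A)` and satisfies (P2) and (P3). -/
theorem claim_p_in_P
    (p0 p1 : Cond) (σ : CtblOrd → CtblOrd)
    (htw : Twins p0 p1 σ)
    (hsep1 : ∀ x ∈ p0.A ∩ p1.A, ∀ y ∈ p0.A \ p1.A, x < y)
    (hsep2 : ∀ y ∈ p0.A \ p1.A, ∀ z ∈ p1.A \ p0.A, y < z)
    (B : Finset CtblOrd)
    (hB : ∀ b ∈ B, b ∉ p0.A ∪ p1.A)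
    (hBcard : B.card = (p0.A ∪ p1.A).card * p0.n)
    (ρ : CtblOrd → ℕ → CtblOrd)
    (hρB : ∀ α ∈ p0.A ∪ p1.A, ∀ i < p0.n, ρ α i ∈ B)
    (hρinj : ∀ α ∈ p0.A ∪ p1.A, ∀ α' ∈ p0.A ∪ p1.A, ∀ i < p0.n, ∀ i' < p0.n,
      ρ α i = ρ α' i' → α = α' ∧ i = i')
    (hρsurj : ∀ b ∈ B, ∃ α ∈ p0.A ∪ p1.A, ∃ i < p0.n, ρ α i = b)
    (ex : CtblOrd → CtblOrd)
    (hex0 : ∀ α ∈ p0.A, ex α = σ α)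
    (hex1 : ∀ α ∈ p0.A, ex (σ α) = α)
    (sm : CtblOrd → CtblOrd)
    (hsm0 : ∀ α ∈ p0.A, sm α = α)
    (hsm1 : ∀ α ∈ p0.A, sm (σ α) = α)
    (V0 V1 W0 W1 : CtblOrd → ℕ → Finset CtblOrd)
    (hV0 : ∀ β j x, x ∈ V0 β j ↔
      ∃ α ∈ p0.A, ∃ i < p0.n, ρ α i = x ∧ p0.U α i ⊆ p0.U β j)
    (hV1 : ∀ β j x, x ∈ V1 β j ↔
      ∃ α ∈ p1.A, ∃ i < p0.n, ρ α i = x ∧ p1.U α i ⊆ p1.U β j)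
    (hW0 : ∀ β j x, x ∈ W0 β j ↔
      ∃ α ∈ p1.A, ∃ i < p0.n, ρ α i = x ∧
        ∃ γ ∈ p0.A ∩ p1.A, ∃ l < p0.n, p1.U α i ⊆ p1.U γ l ∧ p0.U γ l ⊆ p0.U β j)
    (hW1 : ∀ β j x, x ∈ W1 β j ↔
      ∃ α ∈ p0.A, ∃ i < p0.n, ρ α i = x ∧
        ∃ γ ∈ p0.A ∩ p1.A, ∃ l < p0.n, p0.U α i ⊆ p0.U γ l ∧ p1.U γ l ⊆ p1.U β j)
    (U' : CtblOrd → ℕ → Finset CtblOrd)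
    (hU'0 : ∀ β ∈ p0.A, ∀ j < p0.n,
      U' β j = p0.U β j ∪ p1.U (ex β) j ∪ V0 β j ∪ W0 β j)
    (hU'1 : ∀ β ∈ p1.A, ∀ j < p0.n,
      U' β j = p1.U β j ∪ p0.U (ex β) j ∪ V1 β j ∪ W1 β j)
    (hU'B : ∀ α ∈ p0.A ∪ p1.A, ∀ i < p0.n, ∀ j < p0.n, U' (ρ α i) j = {ρ α i})
    (ξ0 ξ1 : CtblOrd) (hξ0 : ξ0 ∈ p0.A \ p1.A) (hξ1 : ξ1 = σ ξ0)
    (k m : ℕ) (hkm : k < m) (hmn : m < p0.n)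
    (U : CtblOrd → ℕ → Finset CtblOrd)
    (hUyes : ∀ z ∈ (p0.A ∪ p1.A) ∪ B, ∀ j < p0.n,
      z ∈ p0.A → p0.U ξ0 k ⊆ p0.U z j → U z j = U' z j ∪ U' ξ1 k)
    (hUno : ∀ z ∈ (p0.A ∪ p1.A) ∪ B, ∀ j < p0.n,
      ¬(z ∈ p0.A ∧ p0.U ξ0 k ⊆ p0.U z j) → U z j = U' z j)
    :
    (∀ z ∈ (p0.A ∪ p1.A) ∪ B, ∀ i < p0.n, U z i ⊆ (p0.A ∪ p1.A) ∪ B) ∧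
    (∀ z ∈ (p0.A ∪ p1.A) ∪ B, ∀ i < p0.n, z ∈ U z i) ∧
    (∀ z ∈ (p0.A ∪ p1.A) ∪ B, ∀ i, 1 ≤ i → i < p0.n → U z i ⊆ U z (i - 1)) ∧
    (∀ z ∈ (p0.A ∪ p1.A) ∪ B, ∀ w ∈ (p0.A ∪ p1.A) ∪ B, ∀ i < p0.n,
      w ∈ U z i → U z i ⊆ U w 0 → w ≤ z) := by
  classical
  obtain ⟨hn, -, himg, hmono, hfix, hI2⟩ := htw
  have hk : k < p0.n := hkm.trans hmn
  have hnpos : 0 < p0.n := Nat.lt_of_le_of_lt (Nat.zero_le k) hk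
  have hσmem : ∀ α ∈ p0.A, σ α ∈ p1.A := fun α hα => himg ▸ Finset.mem_image_of_mem σ hα
  have hinj : ∀ α ∈ p0.A, ∀ β ∈ p0.A, σ α = σ β → α = β := by
    intro α hα β hβ h
    rcases lt_trichotomy α β with h' | h' | h'
    · exact absurd h (ne_of_lt (hmono α hα β hβ h'))
    · exact h'
    · exact absurd h.symm (ne_of_lt (hmono β hβ α hα h'))
  have hfixA0 : ∀ δ, δ ∈ p0.A → δ ∈ p1.A → σ δ = δ :=
    fun δ h1 h2 => hfix δ (Finset.mem_inter.2 ⟨h1, h2⟩)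
  have hσpre : ∀ β ∈ p1.A, ∃ α, α ∈ p0.A ∧ σ α = β := by
    intro β hβ
    have : β ∈ p0.A.image σ := himg.symm ▸ hβ
    obtain ⟨α, hα, h⟩ := Finset.mem_image.1 this
    exact ⟨α, hα, h⟩
  have hξ0A : ξ0 ∈ p0.A := (Finset.mem_sdiff.1 hξ0).1
  have hξ0n1 : ξ0 ∉ p1.A := (Finset.mem_sdiff.1 hξ0).2
  have hξ1A : ξ1 ∈ p1.A := by rw [hξ1]; exact hσmem ξ0 hξ0A
  have hξ1n0 : ξ1 ∉ p0.A := by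
    rw [hξ1]
    intro h
    have h2 : σ (σ ξ0) = σ ξ0 := hfixA0 (σ ξ0) h (hσmem ξ0 hξ0A)
    have h3 : ξ0 = σ ξ0 := hinj ξ0 hξ0A (σ ξ0) h h2.symm
    exact hξ0n1 (by rw [h3]; exact hσmem ξ0 hξ0A)
  have hU0sub : ∀ α ∈ p0.A, ∀ i < p0.n, p0.U α i ⊆ p0.A := p0.mem_powerset
  have hU1sub : ∀ α ∈ p1.A, ∀ i < p0.n, p1.U α i ⊆ p1.A :=
    fun α hα i hi => p1.mem_powerset α hα i (hn ▸ hi)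
  have hmemfwd : ∀ α ∈ p0.A, ∀ i < p0.n, ∀ v ∈ p0.U α i, σ v ∈ p1.U (σ α) i := by
    intro α hα i hi v hv
    rw [hI2 α hα i hi]
    exact Finset.mem_image_of_mem σ hv
  have hmembwd : ∀ α ∈ p0.A, ∀ i < p0.n, ∀ w ∈ p1.U (σ α) i, ∃ v, v ∈ p0.U α i ∧ σ v = w := by
    intro α hα i hi w hw
    rw [hI2 α hα i hi] at hw
    obtain ⟨v, hv, h⟩ := Finset.mem_image.1 hw
    exact ⟨v, hv, h⟩
  have hsubbwd : ∀ α ∈ p0.A, ∀ i < p0.n, ∀ β ∈ p0.A, ∀ j < p0.n,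
      p1.U (σ α) i ⊆ p1.U (σ β) j → p0.U α i ⊆ p0.U β j := by
    intro α hα i hi β hβ j hj hs v hv
    obtain ⟨v', hv', heq⟩ := hmembwd β hβ j hj (σ v) (hs (hmemfwd α hα i hi v hv))
    exact (hinj v' (hU0sub β hβ j hj hv') v (hU0sub α hα i hi hv) heq) ▸ hv'
  have hsubfwd : ∀ α ∈ p0.A, ∀ i < p0.n, ∀ β ∈ p0.A, ∀ j < p0.n,
      p0.U α i ⊆ p0.U β j → p1.U (σ α) i ⊆ p1.U (σ β) j := by
    intro α hα i hi β hβ j hj hs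
    rw [hI2 α hα i hi, hI2 β hβ j hj]
    exact Finset.image_subset_image hs
  have hV0B : ∀ β j, V0 β j ⊆ B := by
    intro β j x hx
    obtain ⟨α, hα, i, hi, heq, -⟩ := (hV0 β j x).1 hx
    exact heq ▸ hρB α (Finset.mem_union.2 (Or.inl hα)) i hi
  have hV1B : ∀ β j, V1 β j ⊆ B := by
    intro β j x hx
    obtain ⟨α, hα, i, hi, heq, -⟩ := (hV1 β j x).1 hx
    exact heq ▸ hρB α (Finset.mem_union.2 (Or.inr hα)) i hi
  have hW0B : ∀ β j, W0 β j ⊆ B := by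
    intro β j x hx
    obtain ⟨α, hα, i, hi, heq, -⟩ := (hW0 β j x).1 hx
    exact heq ▸ hρB α (Finset.mem_union.2 (Or.inr hα)) i hi
  have hW1B : ∀ β j, W1 β j ⊆ B := by
    intro β j x hx
    obtain ⟨α, hα, i, hi, heq, -⟩ := (hW1 β j x).1 hx
    exact heq ▸ hρB α (Finset.mem_union.2 (Or.inl hα)) i hi
  have hexξ1 : ex ξ1 = ξ0 := by rw [hξ1]; exact hex1 ξ0 hξ0A
  -- description of U' on A0
  have hU'0' : ∀ z ∈ p0.A, ∀ j < p0.n,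
      U' z j = p0.U z j ∪ p1.U (σ z) j ∪ V0 z j ∪ W0 z j := by
    intro z hz j hj
    rw [hU'0 z hz j hj, hex0 z hz]
  have hU'ξ : U' ξ1 k = p1.U ξ1 k ∪ p0.U ξ0 k ∪ V1 ξ1 k ∪ W1 ξ1 k := by
    rw [hU'1 ξ1 hξ1A k hk, hexξ1]
  -- the case description of U
  have hUeq : ∀ z ∈ (p0.A ∪ p1.A) ∪ B, ∀ j < p0.n,
      U z j = U' z j ∨ (z ∈ p0.A ∧ p0.U ξ0 k ⊆ p0.U z j ∧ U z j = U' z j ∪ U' ξ1 k) := by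
    intro z hz j hj
    by_cases h : z ∈ p0.A ∧ p0.U ξ0 k ⊆ p0.U z j
    · exact Or.inr ⟨h.1, h.2, hUyes z hz j hj h.1 h.2⟩
    · exact Or.inl (hUno z hz j hj h)
  have hU'subU : ∀ z ∈ (p0.A ∪ p1.A) ∪ B, ∀ j < p0.n, U' z j ⊆ U z j := by
    intro z hz j hj
    rcases hUeq z hz j hj with h | ⟨-, -, h⟩
    · rw [h]
    · rw [h]; exact Finset.subset_union_left
  have hBsing : ∀ b ∈ B, ∀ j < p0.n, U b j = {b} := by
    intro b hb j hj
    obtain ⟨α, hα, i, hi, heq⟩ := hρsurj b hb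
    have h1 : U b j = U' b j :=
      hUno b (Finset.mem_union.2 (Or.inr hb)) j hj (fun h => hB b hb (Finset.mem_union.2 (Or.inl h.1)))
    rw [h1, ← heq, hU'B α hα i hi j hj]
  have hU'subA : ∀ z ∈ p0.A ∪ p1.A, ∀ j < p0.n, U' z j ⊆ (p0.A ∪ p1.A) ∪ B := by
    intro z hz j hj
    have hBsubA : B ⊆ (p0.A ∪ p1.A) ∪ B := Finset.subset_union_right
    rcases Finset.mem_union.1 hz with hz0 | hz1
    · rw [hU'0' z hz0 j hj]
      refine Finset.union_subset (Finset.union_subset (Finset.union_subset ?_ ?_) ?_) ?_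
      · exact fun x hx => Finset.mem_union.2 (Or.inl (Finset.mem_union.2 (Or.inl (hU0sub z hz0 j hj hx))))
      · exact fun x hx => Finset.mem_union.2 (Or.inl (Finset.mem_union.2 (Or.inr (hU1sub (σ z) (hσmem z hz0) j hj hx))))
      · exact (hV0B z j).trans hBsubA
      · exact (hW0B z j).trans hBsubA
    · obtain ⟨v, hv, hveq⟩ := hσpre z hz1
      have hev : ex z = v := by rw [← hveq]; exact hex1 v hv
      rw [hU'1 z hz1 j hj, hev]
      refine Finset.union_subset (Finset.union_subset (Finset.union_subset ?_ ?_) ?_) ?_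
      · exact fun x hx => Finset.mem_union.2 (Or.inl (Finset.mem_union.2 (Or.inr (hU1sub z hz1 j hj hx))))
      · exact fun x hx => Finset.mem_union.2 (Or.inl (Finset.mem_union.2 (Or.inl (hU0sub v hv j hj hx))))
      · exact (hV1B z j).trans hBsubA
      · exact (hW1B z j).trans hBsubA
  have hU'self : ∀ z ∈ p0.A ∪ p1.A, ∀ j < p0.n, z ∈ U' z j := by
    intro z hz j hj
    rcases Finset.mem_union.1 hz with hz0 | hz1
    · rw [hU'0' z hz0 j hj]
      exact Finset.mem_union.2 (Or.inl (Finset.mem_union.2 (Or.inl (Finset.mem_union.2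
        (Or.inl (p0.P2_self z hz0 j hj))))))
    · rw [hU'1 z hz1 j hj]
      exact Finset.mem_union.2 (Or.inl (Finset.mem_union.2 (Or.inl (Finset.mem_union.2
        (Or.inl (p1.P2_self z hz1 j (hn ▸ hj)))))))
  -- P2 self for U
  have hself : ∀ z ∈ (p0.A ∪ p1.A) ∪ B, ∀ i < p0.n, z ∈ U z i := by
    intro z hz i hi
    rcases Finset.mem_union.1 hz with hzA | hzB
    · exact hU'subU z hz i hi (hU'self z hzA i hi)
    · rw [hBsing z hzB i hi]; exact Finset.mem_singleton_self z
  -- ρ z i ∈ U z i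
  have hρself : ∀ z ∈ p0.A ∪ p1.A, ∀ i < p0.n, ρ z i ∈ U z i := by
    intro z hz i hi
    apply hU'subU z (Finset.mem_union.2 (Or.inl hz)) i hi
    rcases Finset.mem_union.1 hz with hz0 | hz1
    · rw [hU'0' z hz0 i hi]
      exact Finset.mem_union.2 (Or.inl (Finset.mem_union.2 (Or.inr
        ((hV0 z i (ρ z i)).2 ⟨z, hz0, i, hi, rfl, Finset.Subset.refl _⟩))))
    · rw [hU'1 z hz1 i hi]
      exact Finset.mem_union.2 (Or.inl (Finset.mem_union.2 (Or.inr
        ((hV1 z i (ρ z i)).2 ⟨z, hz1, i, hi, rfl, Finset.Subset.refl _⟩))))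
  -- decomposition of A*-elements of U z j, z ∈ A0
  have hL5a : ∀ z ∈ p0.A, ∀ j < p0.n, ∀ w, w ∈ U z j → w ∈ p0.A ∪ p1.A →
      w ∈ p0.U z j ∨ w ∈ p1.U (σ z) j ∨
        (p0.U ξ0 k ⊆ p0.U z j ∧ (w ∈ p1.U ξ1 k ∨ w ∈ p0.U ξ0 k)) := by
    intro z hz j hj w hw hwA
    have hnotB : w ∉ B := fun h => hB w h hwA
    have hzA : z ∈ (p0.A ∪ p1.A) ∪ B := Finset.mem_union.2 (Or.inl (Finset.mem_union.2 (Or.inl hz)))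
    rcases hUeq z hzA j hj with h | ⟨-, hyes, h⟩
    · rw [h, hU'0' z hz j hj] at hw
      simp only [Finset.mem_union] at hw
      rcases hw with ((h' | h') | h') | h'
      · exact Or.inl h'
      · exact Or.inr (Or.inl h')
      · exact absurd (hV0B z j h') hnotB
      · exact absurd (hW0B z j h') hnotB
    · rw [h, hU'0' z hz j hj, hU'ξ] at hw
      simp only [Finset.mem_union] at hw
      rcases hw with (((h' | h') | h') | h') | (((h' | h') | h') | h')
      · exact Or.inl h'
      · exact Or.inr (Or.inl h')
      · exact absurd (hV0B z j h') hnotB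
      · exact absurd (hW0B z j h') hnotB
      · exact Or.inr (Or.inr ⟨hyes, Or.inl h'⟩)
      · exact Or.inr (Or.inr ⟨hyes, Or.inr h'⟩)
      · exact absurd (hV1B ξ1 k h') hnotB
      · exact absurd (hW1B ξ1 k h') hnotB
  -- decomposition of A*-elements of U z j, z ∈ A1 \ A0
  have hL5b : ∀ z ∈ p1.A, z ∉ p0.A → ∀ j < p0.n, ∀ w, w ∈ U z j → w ∈ p0.A ∪ p1.A →
      ∃ v, v ∈ p0.A ∧ σ v = z ∧ (w ∈ p1.U z j ∨ w ∈ p0.U v j) := by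
    intro z hz1 hz0 j hj w hw hwA
    have hnotB : w ∉ B := fun h => hB w h hwA
    have hzA : z ∈ (p0.A ∪ p1.A) ∪ B := Finset.mem_union.2 (Or.inl (Finset.mem_union.2 (Or.inr hz1)))
    obtain ⟨v, hv, hveq⟩ := hσpre z hz1
    have hev : ex z = v := by rw [← hveq]; exact hex1 v hv
    have h := hUno z hzA j hj (fun h => hz0 h.1)
    rw [h, hU'1 z hz1 j hj, hev] at hw
    simp only [Finset.mem_union] at hw
    refine ⟨v, hv, hveq, ?_⟩
    rcases hw with ((h' | h') | h') | h'
    · exact Or.inl h'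
    · exact Or.inr h'
    · exact absurd (hV1B z j h') hnotB
    · exact absurd (hW1B z j h') hnotB
  -- decomposition of B-elements of U w 0, w ∈ A0
  have hL6a : ∀ w ∈ p0.A, ∀ x ∈ B, x ∈ U w 0 →
      x ∈ V0 w 0 ∨ x ∈ W0 w 0 ∨
        (p0.U ξ0 k ⊆ p0.U w 0 ∧ (x ∈ V1 ξ1 k ∨ x ∈ W1 ξ1 k)) := by
    intro w hw x hxB hx
    have hx0 : x ∉ p0.A := fun h => hB x hxB (Finset.mem_union.2 (Or.inl h))
    have hx1 : x ∉ p1.A := fun h => hB x hxB (Finset.mem_union.2 (Or.inr h))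
    have hwA : w ∈ (p0.A ∪ p1.A) ∪ B := Finset.mem_union.2 (Or.inl (Finset.mem_union.2 (Or.inl hw)))
    rcases hUeq w hwA 0 hnpos with h | ⟨-, hyes, h⟩
    · rw [h, hU'0' w hw 0 hnpos] at hx
      simp only [Finset.mem_union] at hx
      rcases hx with ((h' | h') | h') | h'
      · exact absurd (hU0sub w hw 0 hnpos h') hx0
      · exact absurd (hU1sub (σ w) (hσmem w hw) 0 hnpos h') hx1
      · exact Or.inl h'
      · exact Or.inr (Or.inl h')
    · rw [h, hU'0' w hw 0 hnpos, hU'ξ] at hx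
      simp only [Finset.mem_union] at hx
      rcases hx with (((h' | h') | h') | h') | (((h' | h') | h') | h')
      · exact absurd (hU0sub w hw 0 hnpos h') hx0
      · exact absurd (hU1sub (σ w) (hσmem w hw) 0 hnpos h') hx1
      · exact Or.inl h'
      · exact Or.inr (Or.inl h')
      · exact absurd (hU1sub ξ1 hξ1A k hk h') hx1
      · exact absurd (hU0sub ξ0 hξ0A k hk h') hx0
      · exact Or.inr (Or.inr ⟨hyes, Or.inl h'⟩)
      · exact Or.inr (Or.inr ⟨hyes, Or.inr h'⟩)
  -- decomposition of B-elements of U w 0, w ∈ A1 \ A0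
  have hL6b : ∀ w ∈ p1.A, w ∉ p0.A → ∀ x ∈ B, x ∈ U w 0 → x ∈ V1 w 0 ∨ x ∈ W1 w 0 := by
    intro w hw1 hw0 x hxB hx
    have hx0 : x ∉ p0.A := fun h => hB x hxB (Finset.mem_union.2 (Or.inl h))
    have hx1 : x ∉ p1.A := fun h => hB x hxB (Finset.mem_union.2 (Or.inr h))
    have hwA : w ∈ (p0.A ∪ p1.A) ∪ B := Finset.mem_union.2 (Or.inl (Finset.mem_union.2 (Or.inr hw1)))
    obtain ⟨v, hv, hveq⟩ := hσpre w hw1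
    have hev : ex w = v := by rw [← hveq]; exact hex1 v hv
    have h := hUno w hwA 0 hnpos (fun h => hw0 h.1)
    rw [h, hU'1 w hw1 0 hnpos, hev] at hx
    simp only [Finset.mem_union] at hx
    rcases hx with ((h' | h') | h') | h'
    · exact absurd (hU1sub w hw1 0 hnpos h') hx1
    · exact absurd (hU0sub v hv 0 hnpos h') hx0
    · exact Or.inl h'
    · exact Or.inr h'
  -- order fact: everything in A0 is below A1 \ A0
  have hA0lt : ∀ w ∈ p0.A, ∀ z ∈ p1.A, z ∉ p0.A → w < z := by
    intro w hw z hz1 hz0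
    by_cases hw1 : w ∈ p1.A
    · exact lt_trans (hsep1 w (Finset.mem_inter.2 ⟨hw, hw1⟩) ξ0 hξ0)
        (hsep2 ξ0 hξ0 z (Finset.mem_sdiff.2 ⟨hz1, hz0⟩))
    · exact hsep2 w (Finset.mem_sdiff.2 ⟨hw, hw1⟩) z (Finset.mem_sdiff.2 ⟨hz1, hz0⟩)
  -- Lemma A
  have lemA : ∀ z ∈ p0.A, ∀ w ∈ p0.A, ∀ i < p0.n, p0.U z i ⊆ p0.U w 0 → w ∈ U z i → w ≤ z := by
    intro z hz w hw i hi hsub hwU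
    have hred : w ∈ p0.U z i → w ≤ z := fun h => p0.P3 z hz w hw i hi h hsub
    rcases hL5a z hz i hi w hwU (Finset.mem_union.2 (Or.inl hw)) with h | h | ⟨hyes, h | h⟩
    · exact hred h
    · have hw1 : w ∈ p1.A := hU1sub (σ z) (hσmem z hz) i hi h
      obtain ⟨v, hv, hveq⟩ := hmembwd z hz i hi w h
      have hvA0 : v ∈ p0.A := hU0sub z hz i hi hv
      have hvw : v = w := hinj v hvA0 w hw (by rw [hveq, hfixA0 w hw hw1])
      exact hred (hvw ▸ hv)
    · have hw1 : w ∈ p1.A := hU1sub ξ1 hξ1A k hk h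
      rw [hξ1] at h
      obtain ⟨v, hv, hveq⟩ := hmembwd ξ0 hξ0A k hk w h
      have hvA0 : v ∈ p0.A := hU0sub ξ0 hξ0A k hk hv
      have hvw : v = w := hinj v hvA0 w hw (by rw [hveq, hfixA0 w hw hw1])
      exact hred (hyes (hvw ▸ hv))
    · exact hred (hyes h)
  -- contradiction lemma for Case C
  have lemContra : ∀ w, w ∉ p0.A → w ∈ p1.A → ∀ γ, γ ∈ p0.A → γ ∈ p1.A → ∀ l < p0.n,
      p1.U γ l ⊆ p1.U w 0 → ∀ v ∈ p0.U γ l, σ v = w → False := by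
    intro w hw0 hw1 γ hγ0 hγ1 l hl hs v hv hveq
    have hvA0 : v ∈ p0.A := hU0sub γ hγ0 l hl hv
    have h1 : p1.U (σ γ) l ⊆ p1.U (σ v) 0 := by rw [hfixA0 γ hγ0 hγ1, hveq]; exact hs
    have h2 : p0.U γ l ⊆ p0.U v 0 := hsubbwd γ hγ0 l hl v hvA0 0 hnpos h1
    have h3 : v ≤ γ := p0.P3 γ hγ0 v hvA0 l hl hv h2
    have hvn1 : v ∉ p1.A := fun hv1 => hw0 (by rw [← hveq, hfixA0 v hvA0 hv1]; exact hvA0)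
    exact absurd h3 (not_le.2 (hsep1 γ (Finset.mem_inter.2 ⟨hγ0, hγ1⟩) v
      (Finset.mem_sdiff.2 ⟨hvA0, hvn1⟩)))
  -- w ∈ U z i, z ∈ D, w ∉ A0 implies w ∈ p1.U z i
  have lemWD : ∀ z, z ∈ p0.A → z ∈ p1.A → ∀ i < p0.n, ∀ w, w ∉ p0.A → w ∈ U z i →
      w ∈ p0.A ∪ p1.A → w ∈ p1.U z i := by
    intro z hz0 hz1 i hi w hw0 hmem hwA
    rcases hL5a z hz0 i hi w hmem hwA with h' | h' | ⟨hyes, h' | h'⟩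
    · exact absurd (hU0sub z hz0 i hi h') hw0
    · rwa [hfixA0 z hz0 hz1] at h'
    · have hss : p1.U (σ ξ0) k ⊆ p1.U (σ z) i := hsubfwd ξ0 hξ0A k hk z hz0 i hi hyes
      rw [hξ1] at h'
      have := hss h'
      rwa [hfixA0 z hz0 hz1] at this
    · exact absurd (hU0sub ξ0 hξ0A k hk h') hw0
  -- monotonicity of U'
  have hU'mono : ∀ z ∈ p0.A ∪ p1.A, ∀ i, 1 ≤ i → i < p0.n → U' z i ⊆ U' z (i - 1) := by
    intro z hz i h1 hin
    have hi' : i - 1 < p0.n := lt_of_le_of_lt (Nat.sub_le i 1) hin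
    rcases Finset.mem_union.1 hz with hz0 | hz1
    · rw [hU'0' z hz0 i hin, hU'0' z hz0 (i - 1) hi']
      have h00 : p0.U z i ⊆ p0.U z (i - 1) := p0.P2_mono z hz0 i h1 hin
      refine Finset.union_subset_union (Finset.union_subset_union (Finset.union_subset_union
        h00 (p1.P2_mono (σ z) (hσmem z hz0) i h1 (hn ▸ hin))) ?_) ?_
      · intro x hx
        obtain ⟨α, hα, j, hj, heq, hs⟩ := (hV0 z i x).1 hx
        exact (hV0 z (i - 1) x).2 ⟨α, hα, j, hj, heq, hs.trans h00⟩
      · intro x hx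
        obtain ⟨α, hα, j, hj, heq, γ, hγ, l, hl, hs1, hs2⟩ := (hW0 z i x).1 hx
        exact (hW0 z (i - 1) x).2 ⟨α, hα, j, hj, heq, γ, hγ, l, hl, hs1, hs2.trans h00⟩
    · obtain ⟨v, hv, hveq⟩ := hσpre z hz1
      have hev : ex z = v := by rw [← hveq]; exact hex1 v hv
      rw [hU'1 z hz1 i hin, hU'1 z hz1 (i - 1) hi', hev]
      have h11 : p1.U z i ⊆ p1.U z (i - 1) := p1.P2_mono z hz1 i h1 (hn ▸ hin)
      refine Finset.union_subset_union (Finset.union_subset_union (Finset.union_subset_union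
        h11 (p0.P2_mono v hv i h1 hin)) ?_) ?_
      · intro x hx
        obtain ⟨α, hα, j, hj, heq, hs⟩ := (hV1 z i x).1 hx
        exact (hV1 z (i - 1) x).2 ⟨α, hα, j, hj, heq, hs.trans h11⟩
      · intro x hx
        obtain ⟨α, hα, j, hj, heq, γ, hγ, l, hl, hs1, hs2⟩ := (hW1 z i x).1 hx
        exact (hW1 z (i - 1) x).2 ⟨α, hα, j, hj, heq, γ, hγ, l, hl, hs1, hs2.trans h11⟩
  refine ⟨?_, hself, ?_, ?_⟩
  · -- part 1: U z i ⊆ A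
    intro z hz i hi
    rcases Finset.mem_union.1 hz with hzA | hzB
    · rcases hUeq z hz i hi with h | ⟨hz0, -, h⟩
      · rw [h]; exact hU'subA z hzA i hi
      · rw [h]
        exact Finset.union_subset (hU'subA z hzA i hi)
          (hU'subA ξ1 (Finset.mem_union.2 (Or.inr hξ1A)) k hk)
    · rw [hBsing z hzB i hi]
      intro x hx
      rw [Finset.mem_singleton.1 hx]
      exact hz
  · -- part 3: monotonicity
    intro z hz i h1 hin
    have hi' : i - 1 < p0.n := lt_of_le_of_lt (Nat.sub_le i 1) hin
    rcases Finset.mem_union.1 hz with hzA | hzB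
    · by_cases hy : z ∈ p0.A ∧ p0.U ξ0 k ⊆ p0.U z i
      · have hy2 : p0.U ξ0 k ⊆ p0.U z (i - 1) := hy.2.trans (p0.P2_mono z hy.1 i h1 hin)
        rw [hUyes z hz i hin hy.1 hy.2, hUyes z hz (i - 1) hi' hy.1 hy2]
        exact Finset.union_subset_union (hU'mono z hzA i h1 hin) (Finset.Subset.refl _)
      · rw [hUno z hz i hin hy]
        exact (hU'mono z hzA i h1 hin).trans (hU'subU z hz (i - 1) hi')
    · rw [hBsing z hzB i hin, hBsing z hzB (i - 1) hi']
  · -- part 4: P3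
    intro z hz w hw i hi hmem hsub
    rcases Finset.mem_union.1 hw with hwA | hwB
    · rcases Finset.mem_union.1 hz with hzA | hzB
      · -- both in A*
        have hρzB : ρ z i ∈ B := hρB z hzA i hi
        have hρw : ρ z i ∈ U w 0 := hsub (hρself z hzA i hi)
        by_cases hw0 : w ∈ p0.A
        · by_cases hz0 : z ∈ p0.A
          · -- Case A
            have hkey : p0.U z i ⊆ p0.U w 0 := by
              rcases hL6a w hw0 (ρ z i) hρzB hρw with h | h | ⟨hyes, h | h⟩
              · obtain ⟨α, hα, i', hi', heq, hss⟩ := (hV0 w 0 (ρ z i)).1 h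
                obtain ⟨he1, he2⟩ := hρinj α (Finset.mem_union.2 (Or.inl hα)) z hzA i' hi' i hi heq
                rw [he1, he2] at hss
                exact hss
              · obtain ⟨α, hα1, i', hi', heq, γ, hγ, l, hl, hs1, hs2⟩ := (hW0 w 0 (ρ z i)).1 h
                obtain ⟨he1, he2⟩ := hρinj α (Finset.mem_union.2 (Or.inr hα1)) z hzA i' hi' i hi heq
                subst he1; subst he2
                obtain ⟨hγ0, hγ1⟩ := Finset.mem_inter.1 hγ
                have h' : p1.U (σ α) i' ⊆ p1.U (σ γ) l := by
                  rw [hfixA0 α hz0 hα1, hfixA0 γ hγ0 hγ1]; exact hs1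
                exact (hsubbwd α hz0 i' hi γ hγ0 l hl h').trans hs2
              · obtain ⟨α, hα1, i', hi', heq, hs1⟩ := (hV1 ξ1 k (ρ z i)).1 h
                obtain ⟨he1, he2⟩ := hρinj α (Finset.mem_union.2 (Or.inr hα1)) z hzA i' hi' i hi heq
                subst he1; subst he2
                have h' : p1.U (σ α) i' ⊆ p1.U (σ ξ0) k := by
                  rw [hfixA0 α hz0 hα1, ← hξ1]; exact hs1
                exact (hsubbwd α hz0 i' hi ξ0 hξ0A k hk h').trans hyes
              · obtain ⟨α, hα0, i', hi', heq, γ, hγ, l, hl, hs1, hs2⟩ := (hW1 ξ1 k (ρ z i)).1 h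
                obtain ⟨he1, he2⟩ := hρinj α (Finset.mem_union.2 (Or.inl hα0)) z hzA i' hi' i hi heq
                subst he1; subst he2
                obtain ⟨hγ0, hγ1⟩ := Finset.mem_inter.1 hγ
                have h' : p1.U (σ γ) l ⊆ p1.U (σ ξ0) k := by
                  rw [hfixA0 γ hγ0 hγ1, ← hξ1]; exact hs2
                exact hs1.trans ((hsubbwd γ hγ0 l hl ξ0 hξ0A k hk h').trans hyes)
            exact lemA z hz0 w hw0 i hi hkey hmem
          · -- Case D: z ∈ A1 \ A0
            have hz1 : z ∈ p1.A := (Finset.mem_union.1 hzA).resolve_left hz0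
            exact le_of_lt (hA0lt w hw0 z hz1 hz0)
        · -- w ∈ A1 \ A0
          have hw1 : w ∈ p1.A := (Finset.mem_union.1 hwA).resolve_left hw0
          rcases hL6b w hw1 hw0 (ρ z i) hρzB hρw with h | h
          · -- V1 case: z ∈ A1, U1 z i ⊆ U1 w 0
            obtain ⟨α, hα1, i', hi', heq, hs1⟩ := (hV1 w 0 (ρ z i)).1 h
            obtain ⟨he1, he2⟩ := hρinj α (Finset.mem_union.2 (Or.inr hα1)) z hzA i' hi' i hi heq
            subst he1; subst he2
            by_cases hz0 : α ∈ p0.A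
            · exact p1.P3 α hα1 w hw1 i' (hn ▸ hi) (lemWD α hz0 hα1 i' hi w hw0 hmem hwA) hs1
            · obtain ⟨v, hv, hveq, hcase⟩ := hL5b α hα1 hz0 i' hi w hmem hwA
              rcases hcase with h' | h'
              · exact p1.P3 α hα1 w hw1 i' (hn ▸ hi) h' hs1
              · exact absurd (hU0sub v hv i' hi h') hw0
          · -- W1 case: z ∈ A0
            obtain ⟨α, hα0, i', hi', heq, γ, hγ, l, hl, hs1, hs2⟩ := (hW1 w 0 (ρ z i)).1 h
            obtain ⟨he1, he2⟩ := hρinj α (Finset.mem_union.2 (Or.inl hα0)) z hzA i' hi' i hi heq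
            subst he1; subst he2
            obtain ⟨hγ0, hγ1⟩ := Finset.mem_inter.1 hγ
            by_cases hz1 : α ∈ p1.A
            · -- α ∈ D
              have hs3 : p1.U (σ α) i' ⊆ p1.U (σ γ) l := hsubfwd α hα0 i' hi γ hγ0 l hl hs1
              have hs4 : p1.U α i' ⊆ p1.U w 0 := by
                rw [← hfixA0 α hα0 hz1]
                exact hs3.trans (by rw [hfixA0 γ hγ0 hγ1]; exact hs2)
              exact p1.P3 α hz1 w hw1 i' (hn ▸ hi) (lemWD α hα0 hz1 i' hi w hw0 hmem hwA) hs4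
            · -- α ∈ A0 \ A1: contradiction
              rcases hL5a α hα0 i' hi w hmem hwA with h' | h' | ⟨hyes, h' | h'⟩
              · exact absurd (hU0sub α hα0 i' hi h') hw0
              · obtain ⟨v, hv, hveq⟩ := hmembwd α hα0 i' hi w h'
                exact (lemContra w hw0 hw1 γ hγ0 hγ1 l hl hs2 v (hs1 hv) hveq).elim
              · rw [hξ1] at h'
                obtain ⟨v, hv, hveq⟩ := hmembwd ξ0 hξ0A k hk w h'
                exact (lemContra w hw0 hw1 γ hγ0 hγ1 l hl hs2 v (hs1 (hyes hv)) hveq).elim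
              · exact absurd (hU0sub ξ0 hξ0A k hk h') hw0
      · -- z ∈ B
        rw [hBsing z hzB i hi] at hmem
        exact le_of_eq (Finset.mem_singleton.1 hmem)
    · -- w ∈ B
      rw [hBsing w hwB 0 hnpos] at hsub
      have := Finset.mem_singleton.1 (hsub (hself z hz i hi))
      exact le_of_eq this.symm
end
end
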